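/- arXiv:2111.05780 — 8 statements merged into one kernel-verified Lean document; each statement's English description precedes it below -/
import Mathlib

section
/- Let S be a finite set with k·n elements that is partitioned in two different ways into n subsets each of size k, namely A_1,...,A_n and B_1,...,B_n. Then there exist n elements r_1,...,r_n of S and a permutation π of {1,...,n} such that r_i ∈ A_i ∩ B_{π(i)} for all i. -/
/-- König's theorem on common systems of distinct representatives:
if a set `S` of `k * n` elements is partitioned in two ways into `n` blocks
`A 0, …, A (n-1)` and `B 0, …, B (n-1)`, each block of size `k`, then there
are `n` elements `r 0, …, r (n-1)` of `S` and a permutation `π` with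
`r i ∈ A i ∩ B (π i)` for every `i`. -/
theorem konig_common_representatives {α : Type*} [DecidableEq α]
    (k n : ℕ) (hk : 0 < k) (hn : 0 < n) (S : Finset α) (hS : S.card = k * n)
    (A B : Fin n → Finset α)
    (hAcard : ∀ i, (A i).card = k) (hBcard : ∀ i, (B i).card = k)
    (hAdisj : ∀ i j, i ≠ j → Disjoint (A i) (A j))
    (hBdisj : ∀ i j, i ≠ j → Disjoint (B i) (B j))
    (hAcover : Finset.univ.biUnion A = S)
    (hBcover : Finset.univ.biUnion B = S) :
    ∃ (r : Fin n → α) (π : Equiv.Perm (Fin n)),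
      Function.Injective r ∧ ∀ i, r i ∈ A i ∩ B (π i) := by
  set t : Fin n → Finset (Fin n) :=
    fun i => Finset.univ.filter (fun j => (A i ∩ B j).Nonempty) with ht
  have hall : ∀ I : Finset (Fin n), I.card ≤ (I.biUnion t).card := by
    intro I
    have hsub : I.biUnion A ⊆ (I.biUnion t).biUnion B := by
      intro x hx
      rcases Finset.mem_biUnion.1 hx with ⟨i, hi, hxi⟩
      have hxS : x ∈ S := by
        rw [← hAcover]; exact Finset.mem_biUnion.2 ⟨i, Finset.mem_univ i, hxi⟩
      rw [← hBcover] at hxS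
      rcases Finset.mem_biUnion.1 hxS with ⟨j, _, hxj⟩
      refine Finset.mem_biUnion.2 ⟨j, ?_, hxj⟩
      refine Finset.mem_biUnion.2 ⟨i, hi, ?_⟩
      simp only [ht, Finset.mem_filter, Finset.mem_univ, true_and]
      exact ⟨x, Finset.mem_inter.2 ⟨hxi, hxj⟩⟩
    have hA : (I.biUnion A).card = k * I.card := by
      rw [Finset.card_biUnion (fun i _ j _ hij => hAdisj i j hij)]
      simp [hAcard, Finset.sum_const, mul_comm]
    have hB : ((I.biUnion t).biUnion B).card = k * (I.biUnion t).card := by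
      rw [Finset.card_biUnion (fun i _ j _ hij => hBdisj i j hij)]
      simp [hBcard, Finset.sum_const, mul_comm]
    have := Finset.card_le_card hsub
    rw [hA, hB] at this
    exact Nat.le_of_mul_le_mul_left this hk
  obtain ⟨f, hfinj, hf⟩ :=
    (Finset.all_card_le_biUnion_card_iff_exists_injective t).1 hall
  have hfbij : Function.Bijective f := Finite.injective_iff_bijective.1 hfinj
  let π : Equiv.Perm (Fin n) := Equiv.ofBijective f hfbij
  have hne : ∀ i, (A i ∩ B (f i)).Nonempty := by
    intro i
    have := hf i
    simp only [ht, Finset.mem_filter, Finset.mem_univ, true_and] at this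
    exact this
  choose r hr using hne
  refine ⟨r, π, ?_, fun i => hr i⟩
  intro i j hij
  by_contra hne'
  have h1 : r i ∈ A i := (Finset.mem_inter.1 (hr i)).1
  have h2 : r j ∈ A j := (Finset.mem_inter.1 (hr j)).1
  exact Finset.disjoint_left.1 (hAdisj i j hne') h1 (hij ▸ h2)
end

section
/- Let S be a finite set with k·n elements partitioned in two ways into n subsets of size k each, A_1,...,A_n and B_1,...,B_n. Then there exists a function ℓ : S → {1,...,k} (a labeling with k labels) such that for every i, the restriction of ℓ to A_i is a bijection onto {1,...,k}, and likewise the restriction of ℓ to each B_i is a bijection onto {1,...,k}. -/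
/-- Helper: lift a labeling of the blocks with one marked element removed to a
labeling of the full blocks, giving the marked element the new label `m`. -/
lemma labeling_half {α : Type*} [DecidableEq α] (m n : ℕ)
    (S M : Finset α) (A : Fin n → Finset α) (x : Fin n → α)
    (hxA : ∀ i, x i ∈ A i)
    (hM : ∀ y, y ∈ M ↔ ∃ i, x i = y)
    (hdisj : ∀ i j, i ≠ j → Disjoint (A i) (A j))
    (hAS : ∀ i, A i ⊆ S)
    (ℓ' : α → ℕ)
    (hlt : ∀ y ∈ S \ M, ℓ' y < m)
    (hIH : ∀ i, ∀ c < m, ∃! y, y ∈ (A i).erase (x i) ∧ ℓ' y = c) :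
    ∀ i, ∀ c < m + 1, ∃! y, y ∈ A i ∧ (if y ∈ M then m else ℓ' y) = c := by
  intro i c hc
  -- key: membership in M of an element of A i forces it to be x i
  have hMem : ∀ y ∈ A i, y ∈ M → y = x i := by
    intro y hyA hyM
    obtain ⟨j, rfl⟩ := (hM y).mp hyM
    by_cases hij : j = i
    · subst hij; rfl
    · exact absurd (Finset.disjoint_left.mp (hdisj j i hij) (hxA j) hyA) (fun h => h)
  rcases Nat.lt_or_ge c m with hcm | hcm
  · -- c < m : use the inductive labeling
    obtain ⟨w, ⟨hwA', hwc⟩, hw⟩ := hIH i c hcm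
    have hwA : w ∈ A i := Finset.mem_of_mem_erase hwA'
    have hwne : w ≠ x i := Finset.ne_of_mem_erase hwA'
    have hwM : w ∉ M := fun h => hwne (hMem w hwA h)
    refine ⟨w, ⟨hwA, by simp [hwM, hwc]⟩, ?_⟩
    intro y ⟨hyA, hyc⟩
    have hyM : y ∉ M := by
      intro h
      rw [if_pos h] at hyc
      omega
    rw [if_neg hyM] at hyc
    have hyne : y ≠ x i := fun h => hyM ((hM y).mpr ⟨i, h.symm⟩)
    exact hw y ⟨Finset.mem_erase.mpr ⟨hyne, hyA⟩, hyc⟩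
  · -- c = m : the marked element x i is the unique witness
    have hcm' : c = m := by omega
    have hxM : x i ∈ M := (hM (x i)).mpr ⟨i, rfl⟩
    refine ⟨x i, ⟨hxA i, by simp [hxM, hcm']⟩, ?_⟩
    intro y ⟨hyA, hyc⟩
    by_cases hyM : y ∈ M
    · exact hMem y hyA hyM
    · rw [if_neg hyM] at hyc
      have : ℓ' y < m := hlt y (Finset.mem_sdiff.mpr ⟨hAS i hyA, hyM⟩)
      omega

/-- Main auxiliary lemma, by induction on `k`, with labels in `ℕ`. -/
lemma labeling_aux {α : Type*} [DecidableEq α] :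
    ∀ k n : ℕ, ∀ S : Finset α, S.card = k * n →
    ∀ A B : Fin n → Finset α,
    (∀ i, (A i).card = k) → (∀ i, (B i).card = k) →
    (∀ i j, i ≠ j → Disjoint (A i) (A j)) →
    (∀ i j, i ≠ j → Disjoint (B i) (B j)) →
    Finset.univ.biUnion A = S → Finset.univ.biUnion B = S →
    ∃ ℓ : α → ℕ, (∀ y ∈ S, ℓ y < k) ∧
      (∀ i, ∀ c < k, ∃! y, y ∈ A i ∧ ℓ y = c) ∧
      (∀ i, ∀ c < k, ∃! y, y ∈ B i ∧ ℓ y = c) := by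
  intro k
  induction k with
  | zero =>
    intro n S hS A B hAcard hBcard _ _ _ _
    refine ⟨fun _ => 0, ?_, ?_, ?_⟩
    · intro y hy
      have : S = ∅ := Finset.card_eq_zero.mp (by simpa using hS)
      simp [this] at hy
    · intro i c hc; omega
    · intro i c hc; omega
  | succ m IH =>
    intro n S hS A B hAcard hBcard hAdisj hBdisj hAcover hBcover
    classical
    have hAS : ∀ i, A i ⊆ S := by
      intro i y hy
      rw [← hAcover]
      exact Finset.mem_biUnion.mpr ⟨i, Finset.mem_univ i, hy⟩
    have hBS : ∀ i, B i ⊆ S := by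
      intro i y hy
      rw [← hBcover]
      exact Finset.mem_biUnion.mpr ⟨i, Finset.mem_univ i, hy⟩
    -- Hall's theorem: find a matching i ↦ σ i with A i ∩ B (σ i) nonempty.
    set t : Fin n → Finset (Fin n) :=
      fun i => Finset.univ.filter (fun j => (A i ∩ B j).Nonempty) with ht
    have hall : ∀ s : Finset (Fin n), s.card ≤ (s.biUnion t).card := by
      intro s
      have hsub : s.biUnion A ⊆ (s.biUnion t).biUnion B := by
        intro y hy
        obtain ⟨i, his, hyA⟩ := Finset.mem_biUnion.mp hy
        have hyS : y ∈ S := hAS i hyA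
        rw [← hBcover] at hyS
        obtain ⟨j, _, hyB⟩ := Finset.mem_biUnion.mp hyS
        refine Finset.mem_biUnion.mpr ⟨j, ?_, hyB⟩
        refine Finset.mem_biUnion.mpr ⟨i, his, ?_⟩
        simp only [ht, Finset.mem_filter, Finset.mem_univ, true_and]
        exact ⟨y, Finset.mem_inter.mpr ⟨hyA, hyB⟩⟩
      have h1 : (s.biUnion A).card = (m + 1) * s.card := by
        rw [Finset.card_biUnion (fun i _ j _ hij => hAdisj i j hij)]
        simp [hAcard, Finset.sum_const, Nat.mul_comm]
      have h2 : ((s.biUnion t).biUnion B).card ≤ (m + 1) * (s.biUnion t).card := by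
        calc ((s.biUnion t).biUnion B).card
            ≤ ∑ j ∈ s.biUnion t, (B j).card := Finset.card_biUnion_le
          _ = (m + 1) * (s.biUnion t).card := by
              simp [hBcard, Finset.sum_const, Nat.mul_comm]
      have := (h1 ▸ Finset.card_le_card hsub).trans h2
      exact Nat.le_of_mul_le_mul_left this (Nat.succ_pos m)
    obtain ⟨σ₀, hσinj, hσmem⟩ :=
      (Finset.all_card_le_biUnion_card_iff_exists_injective t).mp hall
    have hσbij : Function.Bijective σ₀ := Finite.injective_iff_bijective.mp hσinj
    set σ : Fin n ≃ Fin n := Equiv.ofBijective σ₀ hσbij with hσdef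
    have hx : ∀ i, (A i ∩ B (σ i)).Nonempty := by
      intro i
      have := hσmem i
      simp only [ht, Finset.mem_filter] at this
      exact this.2
    set x : Fin n → α := fun i => (hx i).choose with hxdef
    have hxA : ∀ i, x i ∈ A i :=
      fun i => (Finset.mem_inter.mp (hx i).choose_spec).1
    have hxB : ∀ i, x i ∈ B (σ i) :=
      fun i => (Finset.mem_inter.mp (hx i).choose_spec).2
    have hxinj : Function.Injective x := by
      intro i j hij
      by_contra hne
      have h1 : x i ∈ A j := by rw [hij]; exact hxA j
      exact Finset.disjoint_left.mp (hAdisj i j hne) (hxA i) h1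
    set M : Finset α := Finset.univ.image x with hMdef
    have hMmem : ∀ y, y ∈ M ↔ ∃ i, x i = y := by
      intro y; simp [hMdef]
    have hMsub : M ⊆ S := by
      intro y hy
      obtain ⟨i, rfl⟩ := (hMmem y).mp hy
      exact hAS i (hxA i)
    have hMcard : M.card = n := by
      rw [hMdef, Finset.card_image_of_injective _ hxinj, Finset.card_univ, Fintype.card_fin]
    -- marked element of each B-block
    set xB : Fin n → α := fun j => x (σ.symm j) with hxBdef
    have hxBB : ∀ j, xB j ∈ B j := by
      intro j
      have := hxB (σ.symm j)
      simpa [hxBdef] using this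
    have hMmemB : ∀ y, y ∈ M ↔ ∃ j, xB j = y := by
      intro y
      rw [hMmem y]
      constructor
      · rintro ⟨i, rfl⟩; exact ⟨σ i, by simp [hxBdef]⟩
      · rintro ⟨j, rfl⟩; exact ⟨σ.symm j, rfl⟩
    -- the reduced system
    set S' : Finset α := S \ M with hS'def
    have hS'card : S'.card = m * n := by
      rw [hS'def, Finset.card_sdiff_of_subset hMsub, hS, hMcard]
      ring_nf
      omega
    set A' : Fin n → Finset α := fun i => (A i).erase (x i) with hA'def
    set B' : Fin n → Finset α := fun j => (B j).erase (xB j) with hB'def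
    have hA'card : ∀ i, (A' i).card = m := by
      intro i
      rw [hA'def]
      simp [Finset.card_erase_of_mem (hxA i), hAcard i]
    have hB'card : ∀ j, (B' j).card = m := by
      intro j
      rw [hB'def]
      simp [Finset.card_erase_of_mem (hxBB j), hBcard j]
    have hA'disj : ∀ i j, i ≠ j → Disjoint (A' i) (A' j) :=
      fun i j hij => (hAdisj i j hij).mono (Finset.erase_subset _ _) (Finset.erase_subset _ _)
    have hB'disj : ∀ i j, i ≠ j → Disjoint (B' i) (B' j) :=
      fun i j hij => (hBdisj i j hij).mono (Finset.erase_subset _ _) (Finset.erase_subset _ _)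
    have hA'cover : Finset.univ.biUnion A' = S' := by
      ext y
      simp only [hA'def, hS'def, Finset.mem_biUnion, Finset.mem_univ, true_and,
        Finset.mem_erase, Finset.mem_sdiff]
      constructor
      · rintro ⟨i, hne, hyA⟩
        refine ⟨hAS i hyA, ?_⟩
        intro hyM
        obtain ⟨j, rfl⟩ := (hMmem y).mp hyM
        by_cases hij : j = i
        · exact hne (by rw [hij])
        · exact absurd (Finset.disjoint_left.mp (hAdisj j i hij) (hxA j) hyA) (fun h => h)
      · rintro ⟨hyS, hyM⟩
        rw [← hAcover] at hyS
        obtain ⟨i, _, hyA⟩ := Finset.mem_biUnion.mp hyS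
        exact ⟨i, fun h => hyM ((hMmem y).mpr ⟨i, h.symm⟩), hyA⟩
    have hB'cover : Finset.univ.biUnion B' = S' := by
      ext y
      simp only [hB'def, hS'def, Finset.mem_biUnion, Finset.mem_univ, true_and,
        Finset.mem_erase, Finset.mem_sdiff]
      constructor
      · rintro ⟨j, hne, hyB⟩
        refine ⟨hBS j hyB, ?_⟩
        intro hyM
        obtain ⟨j', rfl⟩ := (hMmemB y).mp hyM
        by_cases hjj : j' = j
        · exact hne (by rw [hjj])
        · exact absurd (Finset.disjoint_left.mp (hBdisj j' j hjj) (hxBB j') hyB) (fun h => h)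
      · rintro ⟨hyS, hyM⟩
        rw [← hBcover] at hyS
        obtain ⟨j, _, hyB⟩ := Finset.mem_biUnion.mp hyS
        exact ⟨j, fun h => hyM ((hMmemB y).mpr ⟨j, h.symm⟩), hyB⟩
    obtain ⟨ℓ', hℓ'lt, hℓ'A, hℓ'B⟩ :=
      IH n S' hS'card A' B' hA'card hB'card hA'disj hB'disj hA'cover hB'cover
    refine ⟨fun y => if y ∈ M then m else ℓ' y, ?_, ?_, ?_⟩
    · intro y hyS
      by_cases hyM : y ∈ M
      · simp [hyM]
      · simp only [if_neg hyM]
        have := hℓ'lt y (by rw [hS'def]; exact Finset.mem_sdiff.mpr ⟨hyS, hyM⟩)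
        omega
    · exact labeling_half m n S M A x hxA hMmem hAdisj hAS ℓ'
        (fun y hy => hℓ'lt y (by rwa [hS'def]))
        (fun i c hc => hℓ'A i c hc)
    · exact labeling_half m n S M B xB hxBB hMmemB hBdisj hBS ℓ'
        (fun y hy => hℓ'lt y (by rwa [hS'def]))
        (fun j c hc => hℓ'B j c hc)

/-- If a set `S` of `k * n` elements is partitioned in two ways into `n` blocks
of size `k` each, then the elements can be labeled with `k` labels such that
the labels occurring in each block of either partition are pairwise distinct
(i.e. the labeling restricted to each block is a bijection onto the labels). -/
theorem labeling_two_partitions {α : Type*} [DecidableEq α]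
    (k n : ℕ) (hk : 0 < k) (hn : 0 < n) (S : Finset α) (hS : S.card = k * n)
    (A B : Fin n → Finset α)
    (hAcard : ∀ i, (A i).card = k) (hBcard : ∀ i, (B i).card = k)
    (hAdisj : ∀ i j, i ≠ j → Disjoint (A i) (A j))
    (hBdisj : ∀ i j, i ≠ j → Disjoint (B i) (B j))
    (hAcover : Finset.univ.biUnion A = S)
    (hBcover : Finset.univ.biUnion B = S) :
    ∃ ℓ : α → Fin k,
      (∀ i, ∀ c : Fin k, ∃! x, x ∈ A i ∧ ℓ x = c) ∧
      (∀ i, ∀ c : Fin k, ∃! x, x ∈ B i ∧ ℓ x = c) := by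
  classical
  obtain ⟨ℓ₀, hlt, hA, hB⟩ :=
    labeling_aux k n S hS A B hAcard hBcard hAdisj hBdisj hAcover hBcover
  have hAS : ∀ i, A i ⊆ S := by
    intro i y hy
    rw [← hAcover]
    exact Finset.mem_biUnion.mpr ⟨i, Finset.mem_univ i, hy⟩
  have hBS : ∀ i, B i ⊆ S := by
    intro i y hy
    rw [← hBcover]
    exact Finset.mem_biUnion.mpr ⟨i, Finset.mem_univ i, hy⟩
  refine ⟨fun y => if h : ℓ₀ y < k then ⟨ℓ₀ y, h⟩ else ⟨0, hk⟩, ?_, ?_⟩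
  · intro i c
    obtain ⟨w, ⟨hwA, hwc⟩, hw⟩ := hA i c.val c.isLt
    have hwlt : ℓ₀ w < k := hlt w (hAS i hwA)
    refine ⟨w, ⟨hwA, by simp [dif_pos hwlt, Fin.ext_iff, hwc]⟩, ?_⟩
    intro y ⟨hyA, hyc⟩
    have hylt : ℓ₀ y < k := hlt y (hAS i hyA)
    simp only [dif_pos hylt] at hyc
    exact hw y ⟨hyA, by simpa [Fin.ext_iff] using hyc⟩
  · intro i c
    obtain ⟨w, ⟨hwB, hwc⟩, hw⟩ := hB i c.val c.isLt
    have hwlt : ℓ₀ w < k := hlt w (hBS i hwB)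
    refine ⟨w, ⟨hwB, by simp [dif_pos hwlt, Fin.ext_iff, hwc]⟩, ?_⟩
    intro y ⟨hyB, hyc⟩
    have hylt : ℓ₀ y < k := hlt y (hBS i hyB)
    simp only [dif_pos hylt] at hyc
    exact hw y ⟨hyB, by simpa [Fin.ext_iff] using hyc⟩
end

section
/- Let T be a finite tree and let v be a vertex of T such that the subtree rooted at v (under some rooting) has at least k vertices while the subtree rooted at each child of v has at most k−1 vertices. Then any two vertices in the subtree rooted at v are joined by a path in T with at most 2k−2 edges. -/
/-- The subtree of a tree `G` rooted at `r`, rooted at vertex `v`: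
the set of vertices `u` such that `v` lies on the (unique) path from the
root `r` to `u`. -/
def subtreeAt {V : Type*} (G : SimpleGraph V) (r v : V) : Set V :=
  {u | ∀ p : G.Walk r u, p.IsPath → v ∈ p.support}

/-- In a tree, any path realizes the distance between its endpoints. -/
lemma tree_path_length {V : Type*} {G : SimpleGraph V} (hG : G.IsTree)
    {a b : V} (p : G.Walk a b) (hp : p.IsPath) : p.length = G.dist a b := by
  classical
  obtain ⟨_, h⟩ := (SimpleGraph.isTree_iff_existsUnique_path.mp hG)
  obtain ⟨w, hw⟩ := hG.isConnected.exists_walk_length_eq_dist a b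
  have h1 : p = w.bypass := ((h a b).unique hp w.bypass_isPath)
  have h2 : G.dist a b ≤ p.length := SimpleGraph.dist_le p
  have h3 : p.length ≤ w.length := h1 ▸ w.length_bypass_le
  omega

/-- Let `T` be a finite tree rooted at `r` and `v` a vertex whose rooted
subtree has at least `k` vertices while the subtree rooted at each child of
`v` has at most `k - 1` vertices. Then any two vertices of the subtree of `v`
are joined in `T` by a path with at most `2k - 2` edges. -/
theorem subtree_diameter_le {V : Type*} [Fintype V]
    (G : SimpleGraph V) (hG : G.IsTree) (r v : V) (k : ℕ) (hk : 0 < k)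
    (hbig : k ≤ (subtreeAt G r v).ncard)
    (hchild : ∀ c, G.Adj v c → G.dist r c = G.dist r v + 1 →
      (subtreeAt G r c).ncard ≤ k - 1) :
    ∀ u w, u ∈ subtreeAt G r v → w ∈ subtreeAt G r v →
      G.dist u w ≤ 2 * k - 2 := by
  classical
  obtain ⟨_, huniq⟩ := (SimpleGraph.isTree_iff_existsUnique_path.mp hG)
  -- main claim: every vertex of the subtree of v is within k-1 of v
  have key : ∀ u, u ∈ subtreeAt G r v → G.dist v u ≤ k - 1 := by
    intro u hu
    by_cases huv : u = v
    · subst huv; rw [SimpleGraph.dist_self]; omega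
    obtain ⟨p, hp, -⟩ := huniq r u
    have hv : v ∈ p.support := hu p hp
    have hq : (p.takeUntil v hv).IsPath := hp.takeUntil hv
    have hspec : (p.takeUntil v hv).append (p.dropUntil v hv) = p := p.take_spec hv
    have hs : (p.dropUntil v hv).IsPath := hp.dropUntil hv
    set q := p.takeUntil v hv with hqdef
    cases hsd : p.dropUntil v hv with
    | nil => exact absurd rfl huv
    | @cons _ c _ hadj s' =>
      rw [hsd] at hspec hs
      -- p = (q.concat hadj).append s'
      have hpeq : (q.concat hadj).append s' = p := by
        rw [SimpleGraph.Walk.concat_append]; exact hspec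
      have hrc : (q.concat hadj).IsPath :=
        SimpleGraph.Walk.IsPath.of_append_left (hpeq ▸ hp)
      -- distances
      have hdq : q.length = G.dist r v := tree_path_length hG q hq
      have hdrc : G.dist r c = G.dist r v + 1 := by
        have := tree_path_length hG (q.concat hadj) hrc
        rw [SimpleGraph.Walk.length_concat] at this
        omega
      have hsub : (subtreeAt G r c).ncard ≤ k - 1 := hchild c hadj hdrc
      -- every vertex of s' lies in subtreeAt G r c
      have hmem : ∀ x ∈ s'.support, x ∈ subtreeAt G r c := by
        intro x hx px hpx
        have hxspec : (s'.takeUntil x hx).append (s'.dropUntil x hx) = s' :=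
          s'.take_spec hx
        have hbig' : ((q.concat hadj).append (s'.takeUntil x hx)).append
            (s'.dropUntil x hx) = p := by
          rw [← SimpleGraph.Walk.append_assoc, hxspec, hpeq]
        have hqx : ((q.concat hadj).append (s'.takeUntil x hx)).IsPath :=
          SimpleGraph.Walk.IsPath.of_append_left (hbig' ▸ hp)
        have : px = (q.concat hadj).append (s'.takeUntil x hx) :=
          (huniq r x).unique hpx hqx
        rw [this, SimpleGraph.Walk.mem_support_append_iff]
        right
        exact SimpleGraph.Walk.start_mem_support _
      -- s' is a path, so its support has s'.length + 1 distinct vertices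
      have hs' : s'.IsPath := hs.of_cons
      have hcard : s'.length + 1 ≤ (subtreeAt G r c).ncard := by
        have hsubset : ↑s'.support.toFinset ⊆ subtreeAt G r c := by
          intro x hx
          simp only [List.coe_toFinset, Set.mem_setOf_eq, List.mem_toFinset] at hx ⊢
          exact hmem x hx
        have h1 : s'.support.toFinset.card ≤ (subtreeAt G r c).ncard := by
          have := Set.ncard_le_ncard hsubset (Set.toFinite _)
          rwa [Set.ncard_coe_finset] at this
        have h2 : s'.support.toFinset.card = s'.length + 1 := by
          rw [List.toFinset_card_of_nodup hs'.support_nodup,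
            SimpleGraph.Walk.length_support]
        omega
      -- distance from v to u
      have : G.dist v u ≤ s'.length + 1 := by
        have := SimpleGraph.dist_le (SimpleGraph.Walk.cons hadj s')
        simpa using this
      omega
  intro u w hu hw
  have h1 := key u hu
  have h2 := key w hw
  have htri := hG.isConnected.dist_triangle (u := u) (v := v) (w := w)
  have hcomm : G.dist u v = G.dist v u := SimpleGraph.dist_comm
  omega
end

section
/- For every tree T with 2n vertices (n ≥ 1), the vertex set of T can be partitioned into two sets R and B of size n each, and there exist trees T_R on R and T_B on B, such that every edge of T_R and every edge of T_B joins two vertices whose distance in T is at most 2. -/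
/-!
Let `G²` join distinct vertices at distance at most 2 in `G`. It suffices to order the vertices
so that every vertex but the last has a `G²`-neighbour later in the order and every vertex but
the first has one earlier: then the last `n` and the first `n` vertices both induce connected
subgraphs of `G²`, and spanning trees of these are the required trees.

Such an order exists for every finite connected graph, by induction: delete a vertex `v` whose
removal leaves `G` connected, order the rest, and put `v` next to one of its neighbours `b`:
just before `b` if some earlier vertex is within distance 2 of `v`, just after `b` otherwise.
In the second case, unless `b` is last, `b` has a neighbour other than `v`, which must come
after `b` and is within distance 2 of `v`.
-/

namespace SimpleGraph

variable {V W : Type*}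

-- Not `G.dist u v ≤ 2`, which also holds when `v` is unreachable from `u` (`dist` is then `0`).
def square (G : SimpleGraph V) : SimpleGraph V where
  Adj u v := u ≠ v ∧ ∃ p : G.Walk u v, p.length ≤ 2
  symm := ⟨fun _ _ ⟨hne, p, hp⟩ => ⟨hne.symm, p.reverse, by simpa using hp⟩⟩
  loopless := ⟨fun _ h => h.1 rfl⟩

variable {G : SimpleGraph V} {u v w : V}

lemma Adj.square (h : G.Adj u v) : G.square.Adj u v :=
  ⟨h.ne, h.toWalk, by simp⟩

lemma square_adj_of_adj_of_adj (huw : G.Adj u w) (hwv : G.Adj w v) (hne : u ≠ v) :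
    G.square.Adj u v :=
  ⟨hne, .cons huw hwv.toWalk, by simp⟩

lemma dist_le_two_of_square_adj (h : G.square.Adj u v) : G.dist u v ≤ 2 :=
  let ⟨_, p, hp⟩ := h
  (dist_le p).trans hp

def Embedding.squareHom {G' : SimpleGraph W} (f : G ↪g G') : G.square →g G'.square where
  toFun := f
  map_rel' := fun ⟨hne, p, hp⟩ => ⟨f.injective.ne hne, p.map f.toHom, by simpa using hp⟩

def IsConnectedOrder (H : SimpleGraph V) : List V → Prop
  | [] => True
  | x :: l => IsConnectedOrder H l ∧ (l ≠ [] → ∃ y ∈ l, H.Adj x y)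

namespace IsConnectedOrder

variable {H : SimpleGraph V}

@[simp]
lemma nil : H.IsConnectedOrder [] := trivial

@[simp]
lemma cons_iff {x : V} {l : List V} :
    H.IsConnectedOrder (x :: l) ↔ H.IsConnectedOrder l ∧ (l ≠ [] → ∃ y ∈ l, H.Adj x y) :=
  Iff.rfl

lemma of_append_right {A Z : List V} (h : H.IsConnectedOrder (A ++ Z)) :
    H.IsConnectedOrder Z := by
  induction A with
  | nil => exact h
  | cons a A ih => exact ih h.1

lemma append_of_subset {A Z Z' : List V} (h : H.IsConnectedOrder (A ++ Z))
    (h' : H.IsConnectedOrder Z') (hZ : Z ≠ []) (hZZ' : Z ⊆ Z') :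
    H.IsConnectedOrder (A ++ Z') := by
  induction A with
  | nil => exact h'
  | cons a A ih =>
    obtain ⟨y, hy, hay⟩ := h.2 (by simp [hZ])
    exact ⟨ih h.1, fun _ => ⟨y, List.mem_append.mpr ((List.mem_append.mp hy).imp_right
      (@hZZ' y)), hay⟩⟩

lemma insert_before {A Z : List V} {b c : V} (h : H.IsConnectedOrder (A ++ b :: Z))
    (hcb : H.Adj c b) : H.IsConnectedOrder (A ++ c :: b :: Z) :=
  h.append_of_subset ⟨h.of_append_right, fun _ => ⟨b, by simp, hcb⟩⟩ (by simp)
    (List.subset_cons_self _ _)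

lemma insert_after {A Z : List V} {b c : V} (h : H.IsConnectedOrder (A ++ b :: Z))
    (hbc : H.Adj b c) (hZ : Z ≠ [] → ∃ y ∈ Z, H.Adj c y) :
    H.IsConnectedOrder (A ++ b :: c :: Z) :=
  h.append_of_subset ⟨⟨h.of_append_right.1, hZ⟩, fun _ => ⟨c, by simp, hbc⟩⟩ (by simp)
    (List.cons_subset_cons _ (List.subset_cons_self _ _))

lemma map {H' : SimpleGraph W} (f : H →g H') {l : List V} (h : H.IsConnectedOrder l) :
    H'.IsConnectedOrder (l.map f) := by
  induction l with
  | nil => trivial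
  | cons x l ih =>
    obtain ⟨hl, hx⟩ := h
    refine ⟨ih hl, fun hne => ?_⟩
    obtain ⟨y, hy, hxy⟩ := hx (by simpa using hne)
    exact ⟨f y, List.mem_map_of_mem hy, f.map_adj hxy⟩

lemma connected_induce {l : List V} (h : H.IsConnectedOrder l) (hl : l ≠ []) :
    (H.induce {x | x ∈ l}).Connected := by
  induction l with
  | nil => exact absurd rfl hl
  | cons x l ih =>
    rcases eq_or_ne l [] with rfl | hne
    · have : {z | z ∈ [x]} = {x} := by ext; simp
      rw [this, induce_singleton_eq_top]
      exact connected_top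
    · obtain ⟨y, hy, hxy⟩ := h.2 hne
      have : {z | z ∈ x :: l} = {x, y} ∪ {z | z ∈ l} := by
        ext z; simp only [List.mem_cons, Set.mem_ofPred_eq, Set.mem_union, Set.mem_insert_iff,
          Set.mem_singleton_iff]; grind
      rw [this]
      exact induce_union_connected (induce_pair_connected_of_adj hxy).preconnected
        (ih h.1 hne).preconnected ⟨y, by simp, hy⟩

end IsConnectedOrder

lemma Connected.exists_isConnectedOrder_square_of_compl_singleton [Nontrivial V]
    (hG : G.Connected) {v : V} (hv : (G.induce {v}ᶜ).Connected) {l₀ : List V}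
    (hnd : l₀.Nodup) (hmem : ∀ x, x ∈ l₀ ↔ x ≠ v) (h : G.square.IsConnectedOrder l₀)
    (hr : G.square.IsConnectedOrder l₀.reverse) :
    ∃ l : List V, l.Nodup ∧ (∀ x, x ∈ l) ∧
      G.square.IsConnectedOrder l ∧ G.square.IsConnectedOrder l.reverse := by
  obtain ⟨b, hvb⟩ := hG.preconnected.exists_adj_of_nontrivial v
  obtain ⟨A, Z, rfl⟩ := List.append_of_mem ((hmem b).2 hvb.ne')
  have hperm : ∀ l : List V, l.Perm (v :: (A ++ b :: Z)) → l.Nodup ∧ ∀ x, x ∈ l :=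
    fun l hl => ⟨hl.nodup_iff.2 (List.nodup_cons.2 ⟨fun h => (hmem v).1 h rfl, hnd⟩),
      fun x => hl.mem_iff.2 (by by_cases hx : x = v <;> simp_all)⟩
  have hr' : G.square.IsConnectedOrder (Z.reverse ++ b :: A.reverse) := by simpa using hr
  by_cases hA : ∃ y ∈ A, G.square.Adj v y
  · obtain ⟨hnd', hmem'⟩ := hperm (A ++ v :: b :: Z) List.perm_middle
    refine ⟨_, hnd', hmem', h.insert_before hvb.square, ?_⟩
    simpa using hr'.insert_after hvb.symm.square (fun _ => by simpa using hA)
  · obtain ⟨hnd', hmem'⟩ := hperm (A ++ b :: v :: Z)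
      (by simpa using List.perm_middle (l₁ := A ++ [b]) (l₂ := Z) (a := v))
    refine ⟨_, hnd', hmem', h.insert_after hvb.symm.square fun hZ => ?_, ?_⟩
    · obtain ⟨z, hz⟩ := List.exists_mem_of_ne_nil Z hZ
      have hbz : b ≠ z := by
        rintro rfl; exact (List.nodup_cons.1 (List.nodup_middle.1 hnd)).1 (by simp [hz])
      have : Nontrivial ({v}ᶜ : Set V) := nontrivial_of_ne ⟨b, hvb.ne'⟩
        ⟨z, (hmem z).1 (by simp [hz])⟩ (fun h => hbz (congrArg Subtype.val h))
      obtain ⟨⟨q, hqv⟩, hbq⟩ := hv.preconnected.exists_adj_of_nontrivial ⟨b, hvb.ne'⟩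
      have hvq : G.square.Adj v q := square_adj_of_adj_of_adj hvb hbq (Ne.symm hqv)
      refine ⟨q, ?_, hvq⟩
      have hq := (hmem q).2 hqv
      simp only [List.mem_append, List.mem_cons] at hq
      rcases hq with hq | rfl | hq
      · exact absurd ⟨q, hq, hvq⟩ hA
      · exact absurd hbq (G.loopless.irrefl q)
      · exact hq
    · simpa using hr'.insert_before hvb.square

theorem Connected.exists_isConnectedOrder_square [Finite V] (hG : G.Connected) :
    ∃ l : List V, l.Nodup ∧ (∀ x, x ∈ l) ∧
      G.square.IsConnectedOrder l ∧ G.square.IsConnectedOrder l.reverse := by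
  induction hn : Nat.card V using Nat.strong_induction_on generalizing V with
  | _ n ih =>
  rcases subsingleton_or_nontrivial V with hV | hV
  · obtain ⟨x⟩ := hG.nonempty
    exact ⟨[x], List.nodup_singleton x, fun y => by simp [Subsingleton.elim y x], by simp, by simp⟩
  · obtain ⟨v, hv⟩ := hG.exists_connected_induce_compl_singleton_of_finite_nontrivial
    obtain ⟨l, hnd, hmem, h, hr⟩ :=
      ih _ (hn ▸ Finite.card_subtype_lt (x := v) (by simp)) hv rfl
    let f := (Embedding.induce {v}ᶜ : G.induce {v}ᶜ ↪g G).squareHom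
    refine hG.exists_isConnectedOrder_square_of_compl_singleton hv
      (hnd.map Subtype.val_injective)
      (fun x => ⟨fun hx => ?_, fun hx => List.mem_map_of_mem (hmem ⟨x, hx⟩)⟩)
      (h.map f) (List.map_reverse .. ▸ hr.map f)
    obtain ⟨y, -, rfl⟩ := List.mem_map.1 hx
    exact y.2

lemma IsConnectedOrder.exists_isTree_dist_le_two {l : List V}
    (h : G.square.IsConnectedOrder l) (hl : l ≠ []) (s : Set V) (hs : ∀ x, x ∈ s ↔ x ∈ l) :
    ∃ T : SimpleGraph s, T.IsTree ∧ ∀ x y : s, T.Adj x y → G.dist x y ≤ 2 := by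
  obtain ⟨T, hle, hT⟩ := (Set.ext hs ▸ h.connected_induce hl).exists_isTree_le
  exact ⟨T, hT, fun x y h => dist_le_two_of_square_adj (hle h)⟩

end SimpleGraph

/-- Every tree `G` with `2 * n` vertices (`n ≥ 1`) admits a partition of its
vertex set into two sets `R` and `B := Rᶜ` of size `n` each, carrying tree
structures all of whose edges join vertices at distance at most `2` in `G`. -/
theorem balanced_two_partition_dist_two {V : Type*} [Fintype V] [DecidableEq V]
    (G : SimpleGraph V) (hG : G.IsTree) (n : ℕ) (hn : 1 ≤ n)
    (hcard : Fintype.card V = 2 * n) :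
    ∃ R : Finset V, R.card = n ∧ Rᶜ.card = n ∧
      (∃ HR : SimpleGraph {x // x ∈ R}, HR.IsTree ∧
        ∀ u v : {x // x ∈ R}, HR.Adj u v → G.dist u.1 v.1 ≤ 2) ∧
      (∃ HB : SimpleGraph {x // x ∈ Rᶜ}, HB.IsTree ∧
        ∀ u v : {x // x ∈ Rᶜ}, HB.Adj u v → G.dist u.1 v.1 ≤ 2) := by
  obtain ⟨l, hnd, hmem, h, hr⟩ := hG.connected.exists_isConnectedOrder_square
  have hlen : l.length = 2 * n := by
    rw [← hcard, ← List.toFinset_card_of_nodup hnd,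
      Finset.eq_univ_of_forall fun x => List.mem_toFinset.2 (hmem x), Finset.card_univ]
  have hsplit : ∀ x, x ∈ l.take n ↔ x ∉ l.drop n := fun x =>
    ⟨fun h h' => List.disjoint_take_drop hnd le_rfl h h', fun h => by
      have := hmem x; rw [← List.take_append_drop n l, List.mem_append] at this; tauto⟩
  have hdrop : l.drop n ≠ [] := by
    rw [ne_eq, ← List.length_eq_zero_iff, List.length_drop]; omega
  have htake : (l.take n).reverse ≠ [] := by
    rw [ne_eq, ← List.length_eq_zero_iff, List.length_reverse, List.length_take]; omega
  have hR : G.square.IsConnectedOrder (l.drop n) :=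
    (l.take_append_drop n ▸ h).of_append_right
  have hB : G.square.IsConnectedOrder (l.take n).reverse :=
    (List.reverse_append .. ▸ l.take_append_drop n ▸ hr).of_append_right
  have hRcard : (l.drop n).toFinset.card = n := by
    rw [List.toFinset_card_of_nodup (hnd.sublist (List.drop_sublist _ _)), List.length_drop]
    omega
  refine ⟨(l.drop n).toFinset, hRcard, by rw [Finset.card_compl, hRcard]; omega, ?_, ?_⟩
  · exact hR.exists_isTree_dist_le_two hdrop _ fun x => List.mem_toFinset
  · exact hB.exists_isTree_dist_le_two htake _ fun x => by
      simp [List.mem_reverse, hsplit]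
end

section
/- For every integer k ≥ 1 and every tree T with k·n vertices, the vertex set of T can be partitioned into k sets of size n each, each carrying a tree structure whose every edge joins two vertices at distance at most 3 in T. -/
/-!
Sekanina's argument: for a path-convex set `S` of vertices of a tree and `u ∈ S`, the cube of the
tree has a Hamiltonian path of `S` starting at `u` and ending at `u` or at a neighbour of `u`.
If `S ≠ {u}`, pick a neighbour `v ∈ S` of `u`; deleting the edge `uv` splits `S` into two smaller
path-convex sides containing `u` and `v`. Run through the side of `u` from `u`, jump (distance at
most `1 + 1 + 1`) to the end of the path of the side of `v`, and run it backwards to `v`.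
Cutting the Hamiltonian path of the whole tree into `k` consecutive blocks of `n` vertices gives
the partition, each block carrying the path graph on its vertices.
-/

open SimpleGraph

namespace SimpleGraph

theorem pathGraph_mem_edges_of_le_of_lt {n : ℕ} {a b u v : Fin n} (p : (pathGraph n).Walk a b)
    (huv : u.val + 1 = v.val) (ha : a.val ≤ u.val) (hb : u.val < b.val) : s(u, v) ∈ p.edges := by
  induction p with
  | nil => omega
  | @cons x c y h q ih =>
    rw [pathGraph_adj] at h
    by_cases hc : c.val ≤ u.val
    · exact List.mem_cons_of_mem _ (ih hc hb)
    · obtain rfl : x = u := Fin.ext (by omega)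
      obtain rfl : c = v := Fin.ext (by omega)
      exact List.mem_cons_self

theorem isTree_pathGraph (n : ℕ) : (pathGraph (n + 1)).IsTree := by
  refine ⟨pathGraph_connected n, isAcyclic_iff_forall_adj_isBridge.2 fun u v huv => ?_⟩
  refine isBridge_iff_forall_walk_mem_edges.2 fun p => ?_
  rcases pathGraph_adj.1 huv with h | h
  · exact pathGraph_mem_edges_of_le_of_lt p h le_rfl (by omega)
  · simpa [Sym2.eq_swap] using pathGraph_mem_edges_of_le_of_lt p.reverse h le_rfl (by omega)

end SimpleGraph

namespace List

variable {α : Type*} {R : α → α → Prop}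

theorem exists_isTree_toFinset_of_isChain [DecidableEq α] (hR : Std.Symm R) {l : List α}
    (hnd : l.Nodup) (hne : l ≠ []) (hc : l.IsChain R) :
    ∃ H : SimpleGraph {x // x ∈ l.toFinset}, H.IsTree ∧ ∀ u v, H.Adj u v → R u v := by
  obtain ⟨m, hm⟩ : ∃ m, l.length = m + 1 := Nat.exists_eq_succ_of_ne_zero (by simpa using hne)
  let e : Fin l.length ≃ {x // x ∈ l.toFinset} :=
    (hnd.getEquiv l).trans (Equiv.subtypeEquivRight fun _ => mem_toFinset.symm)
  refine ⟨(pathGraph l.length).map e.toEmbedding,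
    (Iso.map e _).isTree_iff.1 (hm ▸ isTree_pathGraph m), ?_⟩
  rintro _ _ ⟨-, s, t, hst, rfl, rfl⟩
  have hchain := isChain_iff_getElem.1 hc
  rcases pathGraph_adj.1 hst with h | h
  · simpa [e, ← h] using hchain s (h ▸ t.isLt)
  · simpa [e, ← h] using hR.symm _ _ (hchain t (h ▸ s.isLt))

theorem length_getElem_splitLengths_replicate {l : List α} {k n : ℕ} (h : k * n ≤ l.length)
    {i : ℕ} (hi : i < ((replicate k n).splitLengths l).length) :
    ((replicate k n).splitLengths l)[i].length = n := by
  rw [splitLengths_length_getElem _ _ (by simpa [mul_comm] using h), getElem_replicate]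

theorem IsChain.append_reverse (hR : Std.Symm R) {l₁ l₂ : List α} {e f : α}
    (h₁ : l₁.IsChain R) (h₂ : l₂.IsChain R) (he : e ∈ l₁.getLast?) (hf : f ∈ l₂.getLast?)
    (hef : R e f) : (l₁ ++ l₂.reverse).IsChain R := by
  refine h₁.append (isChain_reverse.2 (h₂.imp fun a b hab => hR.symm _ _ hab)) ?_
  rw [head?_reverse]
  rintro x hx y hy
  rwa [Option.mem_unique hx he, Option.mem_unique hy hf]

end List

open List in
theorem exists_partition_isTree_of_isChain {α : Type*} [Fintype α] [DecidableEq α]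
    {R : α → α → Prop} (hR : Std.Symm R) {l : List α} (hnd : l.Nodup) (hl : ∀ x, x ∈ l)
    (hc : l.IsChain R) {k n : ℕ} (hn : 0 < n) (hlen : l.length = k * n) :
    ∃ P : Fin k → Finset α,
      (∀ i j, i ≠ j → Disjoint (P i) (P j)) ∧
      Finset.univ.biUnion P = Finset.univ ∧
      (∀ i, (P i).card = n) ∧
      (∀ i, ∃ H : SimpleGraph {x // x ∈ P i}, H.IsTree ∧ ∀ u v, H.Adj u v → R u v) := by
  set L := (replicate k n).splitLengths l with hL
  have hLlen : L.length = k := by simp [hL]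
  have hflat : L.flatten = l := flatten_splitLengths _ _ (by simp [hlen])
  have hchunk : ∀ (i : ℕ) (hi : i < L.length), L[i].length = n :=
    fun i hi => length_getElem_splitLengths_replicate hlen.ge hi
  obtain ⟨hnd', hdisj⟩ := nodup_flatten.1 (hflat ▸ hnd)
  have hnil : [] ∉ L := fun h => by
    obtain ⟨i, hi, hi'⟩ := mem_iff_getElem.1 h
    have := hchunk i hi
    simp only [hi', length_nil] at this
    omega
  have hc' := ((isChain_flatten hnil).1 (hflat ▸ hc)).1
  refine ⟨fun i => L[i.val].toFinset, fun i j hij => ?_, ?_, fun i => ?_, fun i => ?_⟩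
  · rw [disjoint_toFinset_iff_disjoint]
    rcases Fin.lt_or_lt_of_ne hij with h | h
    · exact pairwise_iff_getElem.1 hdisj _ _ _ _ h
    · exact (pairwise_iff_getElem.1 hdisj _ _ _ _ h).symm
  · refine Finset.eq_univ_of_forall fun x => ?_
    obtain ⟨c, hcL, hxc⟩ := mem_flatten.1 (hflat ▸ hl x)
    obtain ⟨i, hi, rfl⟩ := mem_iff_getElem.1 hcL
    exact Finset.mem_biUnion.2 ⟨⟨i, hLlen ▸ hi⟩, Finset.mem_univ _, mem_toFinset.2 hxc⟩
  · rw [toFinset_card_of_nodup (hnd' _ (getElem_mem _)), hchunk]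
  · exact exists_isTree_toFinset_of_isChain hR (hnd' _ (getElem_mem _))
      (fun h => hnil (h ▸ getElem_mem _)) (hc' _ (getElem_mem _))

namespace SimpleGraph

variable {V : Type*} {G : SimpleGraph V}

def IsPathConvex (G : SimpleGraph V) (S : Set V) : Prop :=
  ∀ ⦃x y : V⦄ (p : G.Walk x y), p.IsPath → x ∈ S → y ∈ S → ∀ z ∈ p.support, z ∈ S

theorem IsPathConvex.inter {S T : Set V} (hS : G.IsPathConvex S) (hT : G.IsPathConvex T) :
    G.IsPathConvex (S ∩ T) :=
  fun _ _ p hp hx hy z hz => ⟨hS p hp hx.1 hy.1 z hz, hT p hp hx.2 hy.2 z hz⟩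

theorem IsPathConvex.exists_adj_mem (hG : G.Connected) {S : Set V} (hS : G.IsPathConvex S)
    {u w : V} (hu : u ∈ S) (hw : w ∈ S) (hne : u ≠ w) : ∃ v ∈ S, G.Adj u v := by
  obtain ⟨p, hp⟩ := (hG u w).exists_isPath
  exact ⟨p.snd, hS p hp hu hw _ (p.getVert_mem_support 1), p.adj_snd (Walk.not_nil_of_ne hne)⟩

theorem IsAcyclic.support_subset_of_isPath [DecidableEq V] (hG : G.IsAcyclic) {x y : V}
    {p : G.Walk x y} (hp : p.IsPath) (q : G.Walk x y) : p.support ⊆ q.support := by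
  have : p = q.bypass :=
    congrArg Subtype.val ((hG.subsingleton_path x y).elim ⟨p, hp⟩ ⟨q.bypass, q.bypass_isPath⟩)
  exact this ▸ q.support_bypass_subset_support

/-- The vertices joined to `u` by a walk avoiding `v`; when `u` and `v` are adjacent in a tree,
this is the component of `u` once the edge `uv` is deleted. -/
def branch (G : SimpleGraph V) (u v : V) : Set V :=
  {w | ∃ p : G.Walk w u, v ∉ p.support}

theorem mem_branch_self {u v : V} (h : u ≠ v) : u ∈ G.branch u v :=
  ⟨Walk.nil, by simpa using h.symm⟩

theorem notMem_branch (u v : V) : v ∉ G.branch u v :=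
  fun ⟨p, hp⟩ => hp p.start_mem_support

theorem mem_branch_of_mem_support [DecidableEq V] {u v w z : V} {p : G.Walk w u}
    (hp : v ∉ p.support) (hz : z ∈ p.support) : z ∈ G.branch u v :=
  ⟨p.dropUntil z hz, fun hv => hp (p.support_dropUntil_subset_support hz hv)⟩

theorem mem_branch_of_dist_lt {u v w : V} (hwu : G.Reachable w u)
    (hlt : G.dist w u < G.dist w v) : w ∈ G.branch u v := by
  classical
  obtain ⟨p, hp⟩ := hwu.exists_walk_length_eq_dist
  refine ⟨p, fun hv => hlt.not_ge ?_⟩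
  calc G.dist w v ≤ (p.takeUntil v hv).length := dist_le _
    _ ≤ p.length := p.length_takeUntil_le_length hv
    _ = G.dist w u := hp

theorem IsAcyclic.isPathConvex_branch (hG : G.IsAcyclic) (u v : V) :
    G.IsPathConvex (G.branch u v) := by
  classical
  rintro x y p hp ⟨px, hpx⟩ ⟨py, hpy⟩ z hz
  rcases (Walk.mem_support_append_iff _ _).1 (hG.support_subset_of_isPath hp _ hz)
    with hz | hz
  · exact mem_branch_of_mem_support hpx hz
  · rw [Walk.support_reverse, List.mem_reverse] at hz
    exact mem_branch_of_mem_support hpy hz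

theorem IsTree.mem_branch_or_mem_branch (hG : G.IsTree) {u v : V} (h : G.Adj u v) (w : V) :
    w ∈ G.branch u v ∨ w ∈ G.branch v u := by
  rcases hG.dist_eq_dist_add_one_of_adj w h with hd | hd
  · exact Or.inr (mem_branch_of_dist_lt (hG.connected w v) (by omega))
  · exact Or.inl (mem_branch_of_dist_lt (hG.connected w u) (by omega))

theorem IsAcyclic.disjoint_branch (hG : G.IsAcyclic) {u v : V} (h : G.Adj u v) :
    Disjoint (G.branch u v) (G.branch v u) := by
  classical
  refine Set.disjoint_left.2 fun w ⟨p, hp⟩ ⟨q, hq⟩ => hq ?_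
  have hpath : (p.bypass.concat h).IsPath :=
    p.bypass_isPath.concat (fun hv => hp (p.support_bypass_subset_support hv)) h
  exact hG.support_subset_of_isPath hpath q (by simp [Walk.support_concat])

theorem IsTree.exists_isChain_dist_le_three [DecidableEq V] (hG : G.IsTree) (S : Finset V)
    (hS : G.IsPathConvex S) {u : V} (hu : u ∈ S) :
    ∃ l : List V, l.Nodup ∧ l.toFinset = S ∧ l.head? = some u ∧
      (∃ e ∈ l.getLast?, G.dist e u ≤ 1) ∧ l.IsChain fun a b => G.dist a b ≤ 3 := by
  classical
  induction S using Finset.strongInduction generalizing u with | H S ih =>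
  by_cases hSu : S = {u}
  · subst hSu
    exact ⟨[u], List.nodup_singleton u, by simp, rfl, ⟨u, rfl, by simp⟩, List.isChain_singleton u⟩
  obtain ⟨w, hw, hwu⟩ : ∃ w ∈ S, w ≠ u := by
    by_contra! h
    exact hSu (Finset.eq_singleton_iff_unique_mem.2 ⟨hu, h⟩)
  obtain ⟨v, hv, huv⟩ := hS.exists_adj_mem hG.connected hu hw hwu.symm
  have convex_side : ∀ a b, G.IsPathConvex ↑(S.filter (· ∈ G.branch a b)) := fun a b => by
    rw [Finset.coe_filter]
    exact hS.inter (hG.isAcyclic.isPathConvex_branch a b)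
  have side_ssubset : ∀ a b, b ∈ S → S.filter (· ∈ G.branch a b) ⊂ S := fun a b hb =>
    Finset.filter_ssubset.2 ⟨b, hb, notMem_branch a b⟩
  obtain ⟨l₁, hnd₁, hl₁, hh₁, ⟨e, he, hdist₁⟩, hc₁⟩ := ih _ (side_ssubset u v hv) (convex_side u v)
    (Finset.mem_filter.2 ⟨hu, mem_branch_self huv.ne⟩)
  obtain ⟨l₂, hnd₂, hl₂, hh₂, ⟨f, hf, hdist₂⟩, hc₂⟩ := ih _ (side_ssubset v u hu) (convex_side v u)
    (Finset.mem_filter.2 ⟨hv, mem_branch_self huv.ne'⟩)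
  refine ⟨l₁ ++ l₂.reverse, ?_, ?_, ?_, ⟨v, ?_, (dist_eq_one_iff_adj.2 huv.symm).le⟩, ?_⟩
  · refine hnd₁.append (List.nodup_reverse.2 hnd₂) ?_
    rw [← List.disjoint_toFinset_iff_disjoint, List.toFinset_reverse, hl₁, hl₂]
    exact Finset.disjoint_filter_filter' _ _ (hG.isAcyclic.disjoint_branch huv)
  · rw [List.toFinset_append, List.toFinset_reverse, hl₁, hl₂, ← Finset.filter_or]
    exact Finset.filter_true_of_mem fun w _ => hG.mem_branch_or_mem_branch huv w
  · simp [List.head?_append, hh₁]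
  · simp [List.getLast?_append, hh₂]
  · refine List.IsChain.append_reverse ⟨fun a b h => G.dist_comm ▸ h⟩ hc₁ hc₂ he hf ?_
    calc G.dist e f ≤ G.dist e u + G.dist u v + G.dist v f :=
          (hG.connected.dist_triangle).trans (by gcongr; exact hG.connected.dist_triangle)
      _ ≤ 3 := by rw [dist_eq_one_iff_adj.2 huv, G.dist_comm (u := v)]; omega

end SimpleGraph

theorem balanced_k_partition_dist_three_general {V : Type*} [Fintype V] [DecidableEq V]
    (G : SimpleGraph V) (hG : G.IsTree) (k n : ℕ)
    (hcard : Fintype.card V = k * n) :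
    ∃ P : Fin k → Finset V,
      (∀ i j, i ≠ j → Disjoint (P i) (P j)) ∧
      Finset.univ.biUnion P = Finset.univ ∧
      (∀ i, (P i).card = n) ∧
      (∀ i, ∃ H : SimpleGraph {x // x ∈ P i}, H.IsTree ∧
        ∀ u v : {x // x ∈ P i}, H.Adj u v → G.dist u.1 v.1 ≤ 3) := by
  obtain ⟨u⟩ := hG.connected.nonempty
  obtain ⟨l, hnd, hl, -, -, hc⟩ :=
    hG.exists_isChain_dist_le_three Finset.univ (by simp [IsPathConvex]) (Finset.mem_univ u)
  have hmem : ∀ x, x ∈ l := fun x => List.mem_toFinset.1 (hl ▸ Finset.mem_univ x)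
  have hlen : l.length = k * n := by
    rw [← List.toFinset_card_of_nodup hnd, hl, Finset.card_univ, hcard]
  have hn : 0 < n := Nat.pos_of_mul_pos_left (hcard ▸ Fintype.card_pos_iff.2 ⟨u⟩)
  exact exists_partition_isTree_of_isChain ⟨fun a b h => G.dist_comm ▸ h⟩ hnd hmem hc hn hlen

/-- For every `k ≥ 1`, every tree `G` with `k * n` vertices admits a partition
of its vertex set into `k` sets of size `n` each, each carrying a tree
structure all of whose edges join vertices at distance at most `3` in `G`. -/
theorem balanced_k_partition_dist_three {V : Type*} [Fintype V] [DecidableEq V]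
    (G : SimpleGraph V) (hG : G.IsTree) (k n : ℕ) (hk : 1 ≤ k)
    (hcard : Fintype.card V = k * n) :
    ∃ P : Fin k → Finset V,
      (∀ i j, i ≠ j → Disjoint (P i) (P j)) ∧
      Finset.univ.biUnion P = Finset.univ ∧
      (∀ i, (P i).card = n) ∧
      (∀ i, ∃ H : SimpleGraph {x // x ∈ P i}, H.IsTree ∧
        ∀ u v : {x // x ∈ P i}, H.Adj u v → G.dist u.1 v.1 ≤ 3) :=
  balanced_k_partition_dist_three_general G hG k n hcard
end

section
/- For every integer k ≥ 4, there exists a tree T with k² vertices such that for every partition of the vertices of T into k sets of size k each, and every choice of tree structures on the parts, some part's tree contains an edge joining two vertices whose distance in T is at least 3. -/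
/-!
The tree is the spider with a centre and `k + 1` legs, each a path on `k - 1` vertices. Suppose
every part is spanned by a tree whose edges have length at most `2` in the spider. Vertices on
different legs are that close only if both are heads (neighbours of the centre). A part avoiding
the centre has more vertices than a leg, so it leaves every leg it meets, and it does so through
the head of that leg. The part of the centre has only `k - 1` other vertices, so at least two
legs `t` avoid it. The part through the head of such a leg `t` then consists of the whole leg and
the head of one other leg `m`, and all of leg `m` except its head lies in the part of the centre.
Two such legs `t` give two different legs `m`, so `2 (k - 2) ≤ k - 1`, which fails for `k ≥ 4`.
-/

open Finset

namespace SimpleGraph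

variable {V : Type*} {G : SimpleGraph V}

lemma Walk.sub_le_length (f : V → ℤ) (hf : ∀ x y, G.Adj x y → f x - f y ≤ 1) {u v : V}
    (w : G.Walk u v) : f u - f v ≤ w.length := by
  induction w with
  | nil => simp
  | cons h _ ih => push_cast [Walk.length_cons]; linarith [hf _ _ h]

lemma Reachable.sub_le_dist (f : V → ℤ) (hf : ∀ x y, G.Adj x y → f x - f y ≤ 1) {u v : V}
    (h : G.Reachable u v) : f u - f v ≤ G.dist u v := by
  obtain ⟨w, hw⟩ := h.exists_walk_length_eq_dist
  exact hw ▸ w.sub_le_length f hf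

end SimpleGraph

section ParentGraph

variable {V : Type*}

def parentGraph (p : V → V) : SimpleGraph V := SimpleGraph.fromRel fun x y => p x = y

variable {p : V → V} {d : V → ℕ}

lemma parentGraph_adj {x y : V} : (parentGraph p).Adj x y ↔ x ≠ y ∧ (p x = y ∨ p y = x) :=
  SimpleGraph.fromRel_adj ..

lemma rank_iterate_le (hd : ∀ x, p x ≠ x → d (p x) < d x) (m : ℕ) (x : V) :
    d (p^[m] x) ≤ d x := by
  induction m with
  | zero => rfl
  | succ m ih =>
    rw [Function.iterate_succ_apply']
    by_cases h : p (p^[m] x) = p^[m] x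
    · rwa [h]
    · exact (hd _ h).le.trans ih

lemma parentGraph_isBridge (hd : ∀ x, p x ≠ x → d (p x) < d x) {x : V} (hx : p x ≠ x) :
    (parentGraph p).IsBridge s(x, p x) := by
  rw [SimpleGraph.isBridge_iff_forall_walk_mem_edges]
  intro w
  -- `w` must leave the descendants `D` of `x`, and only the edge `s(x, p x)` leaves `D`.
  set D : Set V := {y | ∃ m, p^[m] y = x}
  have hxD : x ∈ D := ⟨0, rfl⟩
  have hpxD : p x ∉ D := by
    rintro ⟨m, hm⟩
    have := rank_iterate_le hd m (p x)
    rw [hm] at this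
    exact (hd x hx).not_ge this
  obtain ⟨dt, hdt, hfst, hsnd⟩ := w.exists_boundary_dart D hxD hpxD
  rcases (parentGraph_adj.mp dt.adj).2 with h | h
  · obtain ⟨m, hm⟩ := hfst
    cases m with
    | zero =>
      obtain rfl : dt.fst = x := hm
      have : dt.edge = s(dt.fst, p dt.fst) := by rw [h]; rfl
      exact this ▸ List.mem_map_of_mem hdt
    | succ m =>
      rw [Function.iterate_succ_apply, h] at hm
      exact absurd ⟨m, hm⟩ hsnd
  · obtain ⟨m, hm⟩ := hfst
    exact absurd ⟨m + 1, by rw [Function.iterate_succ_apply, h, hm]⟩ hsnd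

lemma parentGraph_isAcyclic (hd : ∀ x, p x ≠ x → d (p x) < d x) :
    (parentGraph p).IsAcyclic := by
  refine SimpleGraph.isAcyclic_iff_forall_adj_isBridge.mpr fun x y hxy => ?_
  rcases (parentGraph_adj.mp hxy).2 with rfl | rfl
  · exact parentGraph_isBridge hd hxy.ne.symm
  · rw [Sym2.eq_swap]
    exact parentGraph_isBridge hd hxy.ne

lemma parentGraph_reachable (hd : ∀ x, p x ≠ x → d (p x) < d x) {r : V}
    (hr : ∀ x, p x = x → x = r) (x : V) : (parentGraph p).Reachable x r := by
  induction hx : d x using Nat.strong_induction_on generalizing x with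
  | _ m ih =>
    by_cases h : p x = x
    · rw [hr x h]
    · have hadj : (parentGraph p).Adj x (p x) := parentGraph_adj.mpr ⟨Ne.symm h, .inl rfl⟩
      exact hadj.reachable.trans (ih _ (hx ▸ hd x h) _ rfl)

lemma parentGraph_isTree (hd : ∀ x, p x ≠ x → d (p x) < d x) {r : V}
    (hr : ∀ x, p x = x → x = r) : (parentGraph p).IsTree where
  connected := have : Nonempty V := ⟨r⟩
    .mk fun x y => (parentGraph_reachable hd hr x).trans (parentGraph_reachable hd hr y).symm
  isAcyclic := parentGraph_isAcyclic hd

end ParentGraph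

section Spider

variable {ι V : Type*} {n : ℕ}

def spiderParent : Option (ι × Fin n) → Option (ι × Fin n)
  | some (t, ⟨j + 1, h⟩) => some (t, ⟨j, by omega⟩)
  | _ => none

def spiderDepth : Option (ι × Fin n) → ℕ
  | none => 0
  | some (_, j) => j + 1

lemma spiderDepth_parent_lt : ∀ w : Option (ι × Fin n),
    spiderParent w ≠ w → spiderDepth (spiderParent w) < spiderDepth w
  | none, h => absurd rfl h
  | some (_, ⟨0, _⟩), _ => Nat.succ_pos _
  | some (_, ⟨_ + 1, _⟩), _ => Nat.lt_succ_self _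

lemma eq_none_of_spiderParent_eq :
    ∀ w : Option (ι × Fin n), spiderParent w = w → w = none
  | none, _ => rfl
  | some (_, ⟨0, _⟩), h | some (_, ⟨_ + 1, _⟩), h => by simp [spiderParent] at h

/-- The spider with legs indexed by `ι`, each a path on `n` vertices, carried over to `V`:
`e (some (t, j))` is the vertex at depth `j + 1` on leg `t` and `e none` is the centre. -/
def spider (e : Option (ι × Fin n) ≃ V) : SimpleGraph V :=
  parentGraph (e ∘ spiderParent ∘ e.symm)

lemma spider_isTree (e : Option (ι × Fin n) ≃ V) : (spider e).IsTree :=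
  parentGraph_isTree (d := spiderDepth ∘ e.symm) (r := e none)
    (fun x hx => by simpa using spiderDepth_parent_lt _ (by simpa [e.eq_symm_apply] using hx))
    (fun x hx => e.symm_apply_eq.mp <|
      eq_none_of_spiderParent_eq (e.symm x) (by simpa [e.eq_symm_apply] using hx))

lemma le_spider_dist (e : Option (ι × Fin n) ≃ V) {s t : ι} (hst : s ≠ t) (i j : Fin n) :
    i + j + 2 ≤ (spider e).dist (e (some (s, i))) (e (some (t, j))) := by
  classical
  let f : Option (ι × Fin n) → ℤ
    | none => 0
    | some (u, l) => if u = s then l + 1 else if u = t then -(l + 1) else 0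
  have hf : ∀ w, f w - f (spiderParent w) ≤ 1 ∧ f (spiderParent w) - f w ≤ 1
    | none => by simp [spiderParent]
    | some (u, ⟨0, _⟩) => by simp only [f, spiderParent]; split_ifs <;> omega
    | some (u, ⟨l + 1, _⟩) => by simp only [f, spiderParent]; split_ifs <;> omega
  have hlip : ∀ x y, (spider e).Adj x y → (f ∘ e.symm) x - (f ∘ e.symm) y ≤ 1 := by
    intro x y hxy
    rcases (parentGraph_adj.mp hxy).2 with rfl | rfl
    · simpa using (hf (e.symm x)).1
    · simpa using (hf (e.symm y)).2
  have := ((spider_isTree e).connected.preconnected (e (some (s, i))) (e (some (t, j)))).sub_le_dist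
    _ hlip
  simp only [Function.comp_apply, Equiv.symm_apply_apply, f, ↓reduceIte, hst.symm] at this
  omega

end Spider

structure ClosePartition {V : Type*} (G : SimpleGraph V) (κ : Type*) (m : ℕ) where
  part : κ → Finset V
  pairwise_disjoint : Pairwise fun i j => Disjoint (part i) (part j)
  exists_mem : ∀ x, ∃ i, x ∈ part i
  card_part : ∀ i, #(part i) = m
  graph : (i : κ) → SimpleGraph {x // x ∈ part i}
  preconnected : ∀ i, (graph i).Preconnected
  dist_le_two : ∀ i u v, (graph i).Adj u v → G.dist u.1 v.1 ≤ 2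

lemma ClosePartition.eq_of_mem_of_mem {V κ : Type*} {G : SimpleGraph V} {m : ℕ}
    (C : ClosePartition G κ m) {x : V} {i j : κ} (hi : x ∈ C.part i) (hj : x ∈ C.part j) :
    i = j := by
  by_contra h
  exact disjoint_left.mp (C.pairwise_disjoint h) hi hj

/-- The features of a spider with legs of `n` vertices indexed by `ι` that the partition
argument needs. -/
structure SpiderLegs {V : Type*} [Fintype V] (G : SimpleGraph V) (ι : Type*) [DecidableEq ι]
    (n : ℕ) where
  leg : V → Option ι
  head : ι → V
  root : V
  leg_eq_none_iff : ∀ x, leg x = none ↔ x = root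
  leg_head : ∀ t, leg (head t) = some t
  card_leg : ∀ t, #{x | leg x = some t} = n
  eq_head : ∀ {x y s t}, leg x = some s → leg y = some t → s ≠ t → G.dist x y ≤ 2 →
    x = head s

namespace SpiderLegs

variable {V ι κ : Type*} [Fintype V] [DecidableEq ι] {G : SimpleGraph V} {n : ℕ}

def ofSpider (e : Option (ι × Fin n) ≃ V) (hn : 0 < n) : SpiderLegs (spider e) ι n where
  leg x := (e.symm x).map Prod.fst
  head t := e (some (t, ⟨0, hn⟩))
  root := e none
  leg_eq_none_iff x := by simp [e.symm_apply_eq]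
  leg_head t := by simp
  card_leg t := by
    classical
    calc _ = #(univ.image fun j => e (some (t, j))) := by
          congr 1
          ext x
          simp [e.symm_apply_eq, eq_comm]
      _ = n := by
          rw [card_image_of_injective _ fun i j h => by simpa using h, card_univ,
            Fintype.card_fin]
  eq_head {x y s t} hx hy hst hxy := by
    obtain ⟨⟨_, i⟩, hx', rfl⟩ := Option.map_eq_some_iff.mp hx
    obtain ⟨⟨_, j⟩, hy', rfl⟩ := Option.map_eq_some_iff.mp hy
    rw [e.symm_apply_eq] at hx' hy'
    subst hx' hy'
    dsimp only at hst
    have := le_spider_dist e hst i j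
    obtain rfl : i = ⟨0, hn⟩ := Fin.ext (show (i : ℕ) = 0 by omega)
    rfl

section

variable (L : SpiderLegs G ι n) (C : ClosePartition G κ (n + 1))

def legSet (t : ι) : Finset V := {x | L.leg x = some t}

@[simp]
lemma mem_legSet {t : ι} {x : V} : x ∈ L.legSet t ↔ L.leg x = some t := by simp [legSet]

lemma card_legSet (t : ι) : #(L.legSet t) = n := L.card_leg t

lemma disjoint_legSet {s t : ι} (h : s ≠ t) : Disjoint (L.legSet s) (L.legSet t) :=
  disjoint_left.mpr fun _ hs ht => h <| Option.some_injective _ <|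
    (L.mem_legSet.mp hs).symm.trans (L.mem_legSet.mp ht)

lemma ne_root_of_mem_legSet {t : ι} {x : V} (hx : x ∈ L.legSet t) : x ≠ L.root := fun h =>
  Option.some_ne_none t <| (L.mem_legSet.mp hx).symm.trans <| (L.leg_eq_none_iff x).mpr h

lemma exists_leg_eq_some {x : V} (hx : x ≠ L.root) : ∃ t, L.leg x = some t :=
  Option.ne_none_iff_exists'.mp fun h => hx ((L.leg_eq_none_iff x).mp h)

lemma head_mem_part {i : κ} (hr : L.root ∉ C.part i) {x : V} (hx : x ∈ C.part i) {t : ι}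
    (hxt : L.leg x = some t) : L.head t ∈ C.part i := by
  obtain ⟨y, hy, hyt⟩ : ∃ y ∈ C.part i, L.leg y ≠ some t := by
    by_contra! h
    have := card_le_card (s := C.part i) (t := L.legSet t) fun y hy => by simpa using h y hy
    rw [C.card_part, L.card_legSet] at this
    omega
  obtain ⟨w⟩ := C.preconnected i ⟨x, hx⟩ ⟨y, hy⟩
  obtain ⟨d, -, hfst, hsnd⟩ := w.exists_boundary_dart {a | L.leg a.1 = some t} hxt hyt
  obtain ⟨s, hs⟩ := L.exists_leg_eq_some fun h => hr (h ▸ d.snd.2)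
  have hts : t ≠ s := fun h => hsnd (h ▸ hs)
  exact L.eq_head hfst hs hts (C.dist_le_two i _ _ d.adj) ▸ d.fst.2

lemma mem_part_of_head_mem {i₀ j : κ} (h₀ : L.root ∈ C.part i₀) {x : V}
    (hx : x ∉ C.part i₀) {t : ι} (hxt : L.leg x = some t) (hj : L.head t ∈ C.part j) :
    x ∈ C.part j := by
  obtain ⟨i, hi⟩ := C.exists_mem x
  have hr : L.root ∉ C.part i := fun h => hx (C.eq_of_mem_of_mem h h₀ ▸ hi)
  exact C.eq_of_mem_of_mem (L.head_mem_part C hr hi hxt) hj ▸ hi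

variable [DecidableEq V] {i₀ : κ}

lemma exists_part_eq_insert_head (h₀ : L.root ∈ C.part i₀) {t : ι}
    (ht : ∀ x ∈ C.part i₀, L.leg x ≠ some t) {j : κ} (hj : L.head t ∈ C.part j) :
    ∃ m ≠ t, C.part j = insert (L.head m) (L.legSet t) := by
  have hsub : L.legSet t ⊆ C.part j := fun x hx =>
    L.mem_part_of_head_mem C h₀ (fun h => ht x h (L.mem_legSet.mp hx)) (L.mem_legSet.mp hx) hj
  obtain ⟨w, hw⟩ : ∃ w, C.part j \ L.legSet t = {w} := by
    rw [← card_eq_one, card_sdiff_of_subset hsub, C.card_part, L.card_legSet,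
      Nat.add_sub_cancel_left]
  have hwj : w ∈ C.part j \ L.legSet t := hw ▸ mem_singleton_self w
  rw [mem_sdiff, L.mem_legSet] at hwj
  have hr : L.root ∉ C.part j := fun h =>
    ht _ (C.eq_of_mem_of_mem h h₀ ▸ hj) (L.leg_head t)
  obtain ⟨m, hm⟩ := L.exists_leg_eq_some fun h => hr (h ▸ hwj.1)
  have hmw : L.head m = w := by
    refine mem_singleton.mp (hw ▸ mem_sdiff.mpr ⟨L.head_mem_part C hr hwj.1 hm, ?_⟩)
    rw [L.mem_legSet, L.leg_head, ← hm]
    exact hwj.2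
  refine ⟨m, fun h => hwj.2 (h ▸ hm), ?_⟩
  rw [hmw, insert_eq, ← hw, sdiff_union_of_subset hsub]

lemma le_card_part_inter_legSet (h₀ : L.root ∈ C.part i₀) {j : κ} {m t : ι} (hmt : m ≠ t)
    (hj : C.part j = insert (L.head m) (L.legSet t)) : n ≤ #(C.part i₀ ∩ L.legSet m) + 1 := by
  have hsub : L.legSet m ⊆ insert (L.head m) (C.part i₀ ∩ L.legSet m) := by
    intro y hy
    by_cases hy₀ : y ∈ C.part i₀
    · exact mem_insert_of_mem (mem_inter.mpr ⟨hy₀, hy⟩)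
    have hyj :=
      L.mem_part_of_head_mem C h₀ hy₀ (L.mem_legSet.mp hy) (hj ▸ mem_insert_self _ _)
    rw [hj, mem_insert] at hyj
    refine mem_insert.mpr (.inl (hyj.resolve_right fun h => hmt ?_))
    exact Option.some_injective _ ((L.mem_legSet.mp hy).symm.trans (L.mem_legSet.mp h))
  have := card_le_card hsub
  rw [L.card_legSet] at this
  exact this.trans (card_insert_le _ _)

lemma card_part_inter_legSet_add_le (h₀ : L.root ∈ C.part i₀) {s t : ι} (hst : s ≠ t) :
    #(C.part i₀ ∩ L.legSet s) + #(C.part i₀ ∩ L.legSet t) ≤ n := by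
  rw [← card_union_of_disjoint ((L.disjoint_legSet hst).mono inter_subset_right
    inter_subset_right)]
  calc #((C.part i₀ ∩ L.legSet s) ∪ (C.part i₀ ∩ L.legSet t))
      ≤ #((C.part i₀).erase L.root) := card_le_card fun x hx => by
        rcases mem_union.mp hx with hx | hx <;>
          exact mem_erase.mpr ⟨L.ne_root_of_mem_legSet (mem_inter.mp hx).2,
            (mem_inter.mp hx).1⟩
    _ = n := by rw [card_erase_of_mem h₀, C.card_part, Nat.add_sub_cancel]

lemma two_le_card_legs_avoiding [Fintype ι] (hι : Fintype.card ι = n + 2)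
    (h₀ : L.root ∈ C.part i₀) : 2 ≤ #{t | ∀ x ∈ C.part i₀, L.leg x ≠ some t} := by
  set T : Finset ι := {t | ∀ x ∈ C.part i₀, L.leg x ≠ some t}
  have : #Tᶜ ≤ n := calc
    #Tᶜ = #(Tᶜ.map .some) := (card_map _).symm
    _ ≤ #(((C.part i₀).erase L.root).image L.leg) := card_le_card fun o ho => by
        obtain ⟨t, ht, rfl⟩ := mem_map.mp ho
        obtain ⟨x, hx, hxt⟩ : ∃ x ∈ C.part i₀, L.leg x = some t := by simpa [T] using ht
        exact mem_image.mpr ⟨x, mem_erase.mpr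
          ⟨L.ne_root_of_mem_legSet (L.mem_legSet.mpr hxt), hx⟩, hxt⟩
    _ ≤ #((C.part i₀).erase L.root) := card_image_le
    _ = n := by rw [card_erase_of_mem h₀, C.card_part, Nat.add_sub_cancel]
  rw [card_compl, hι] at this
  omega

end

theorem isEmpty_closePartition [DecidableEq V] [Fintype ι] (L : SpiderLegs G ι n)
    (hι : Fintype.card ι = n + 2) (hn : 3 ≤ n) : IsEmpty (ClosePartition G κ (n + 1)) := by
  refine ⟨fun C => ?_⟩
  obtain ⟨i₀, h₀⟩ := C.exists_mem L.root
  obtain ⟨t₁, ht₁, t₂, ht₂, ht⟩ := one_lt_card.mp (L.two_le_card_legs_avoiding C hι h₀)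
  obtain ⟨j₁, hj₁⟩ := C.exists_mem (L.head t₁)
  obtain ⟨j₂, hj₂⟩ := C.exists_mem (L.head t₂)
  obtain ⟨m₁, hm₁, hP₁⟩ := L.exists_part_eq_insert_head C h₀ (by simpa using ht₁) hj₁
  obtain ⟨m₂, hm₂, hP₂⟩ := L.exists_part_eq_insert_head C h₀ (by simpa using ht₂) hj₂
  have hm : m₁ ≠ m₂ := by
    rintro rfl
    obtain rfl : j₁ = j₂ := C.eq_of_mem_of_mem (hP₁ ▸ mem_insert_self _ _)
      (hP₂ ▸ mem_insert_self _ _)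
    rcases mem_insert.mp (hP₁ ▸ hj₂) with h | h
    · exact hm₂ (Option.some_injective _ (by rw [← L.leg_head, ← L.leg_head, h])).symm
    · exact ht (Option.some_injective _ ((L.mem_legSet.mp h).symm.trans (L.leg_head t₂)))
  have := L.card_part_inter_legSet_add_le C h₀ hm
  have := L.le_card_part_inter_legSet C h₀ hm₁ hP₁
  have := L.le_card_part_inter_legSet C h₀ hm₂ hP₂
  omega

end SpiderLegs

/-- For every `k ≥ 4` there is a tree on `k²` vertices such that for every
partition of its vertices into `k` sets of size `k` and every choice of tree
structures on the parts, some part's tree has an edge joining two vertices at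
distance at least `3` in the tree. -/
theorem balanced_partition_lower_bound_three (k : ℕ) (hk : 4 ≤ k) :
    ∃ G : SimpleGraph (Fin (k ^ 2)), G.IsTree ∧
      ∀ P : Fin k → Finset (Fin (k ^ 2)),
        (∀ i j, i ≠ j → Disjoint (P i) (P j)) →
        Finset.univ.biUnion P = Finset.univ →
        (∀ i, (P i).card = k) →
        ∀ H : (i : Fin k) → SimpleGraph {x // x ∈ P i},
          (∀ i, (H i).IsTree) →
          ∃ (i : Fin k) (u v : {x // x ∈ P i}),
            (H i).Adj u v ∧ 3 ≤ G.dist u.1 v.1 := by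
  obtain ⟨n, rfl⟩ : ∃ n, k = n + 1 := ⟨k - 1, by omega⟩
  have hcard : Fintype.card (Option (Fin (n + 2) × Fin n)) = (n + 1) ^ 2 := by
    simp only [Fintype.card_option, Fintype.card_prod, Fintype.card_fin]; ring
  let e := Fintype.equivFinOfCardEq hcard
  refine ⟨spider e, spider_isTree e, fun P hdisj hcover hcardP H hH => ?_⟩
  by_contra! hclose
  refine ((SpiderLegs.ofSpider e (by omega)).isEmpty_closePartition (by simp) (by omega)).false
    { part := P
      pairwise_disjoint := hdisj
      exists_mem := fun x => by simpa using hcover.ge (mem_univ x)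
      card_part := hcardP
      graph := H
      preconnected := fun i => (hH i).connected.preconnected
      dist_le_two := fun i u v huv => by have := hclose i u v huv; omega }
end

section
/- Every connected finite graph G on at least 3 vertices has a Hamiltonian cycle in its cube G³, where G³ has the same vertex set as G and an edge between two distinct vertices whenever their distance in G is at most 3. -/
/-- The cube of a graph `G`: same vertex set, with an edge between two distinct
vertices whenever their distance in `G` is at most `3`. -/
def SimpleGraph.cube {V : Type*} (G : SimpleGraph V) : SimpleGraph V :=
  SimpleGraph.fromRel (fun u v => G.Reachable u v ∧ G.dist u v ≤ 3)

namespace SimpleGraph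

variable {V : Type*} {G H : SimpleGraph V} {a b u v x y : V}

lemma cube_adj : G.cube.Adj u v ↔ u ≠ v ∧ G.Reachable u v ∧ G.dist u v ≤ 3 := by
  simp only [cube, fromRel_adj, reachable_comm (u := v), dist_comm (u := v), or_self]

lemma Walk.cube_adj_of_length_le (p : G.Walk u v) (hp : p.length ≤ 3) (huv : u ≠ v) :
    G.cube.Adj u v :=
  cube_adj.2 ⟨huv, p.reachable, (G.dist_le p).trans hp⟩

lemma cube_mono (h : G ≤ H) : G.cube ≤ H.cube := fun _ _ huv ↦ by
  obtain ⟨hne, hr, hd⟩ := cube_adj.1 huv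
  exact cube_adj.2 ⟨hne, hr.mono h, (hr.dist_anti h).trans hd⟩

lemma eq_of_reachable_of_forall_not_adj (h : ∀ w, ¬G.Adj a w) (hr : G.Reachable a v) :
    v = a := by
  obtain ⟨_ | ⟨hadj, _⟩⟩ := hr
  · rfl
  · exact (h _ hadj).elim

lemma Walk.reachable_deleteEdges_or (p : G.Walk u v)
    (hu : (G.deleteEdges {s(a, b)}).Reachable a u ∨ (G.deleteEdges {s(a, b)}).Reachable b u) :
    (G.deleteEdges {s(a, b)}).Reachable a v ∨ (G.deleteEdges {s(a, b)}).Reachable b v := by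
  induction p with
  | nil => exact hu
  | @cons u x w hux q ih =>
    apply ih
    by_cases he : s(u, x) = s(a, b)
    · rcases Sym2.eq_iff.1 he with ⟨-, rfl⟩ | ⟨-, rfl⟩
      · exact .inr .rfl
      · exact .inl .rfl
    · have hadj : (G.deleteEdges {s(a, b)}).Adj u x := deleteEdges_adj.2 ⟨hux, he⟩
      exact hu.imp (·.trans hadj.reachable) (·.trans hadj.reachable)

lemma Walk.IsPath.append_cons {p : G.Walk a x} {q : G.Walk y b} (hp : p.IsPath) (hq : q.IsPath)
    (h : G.Adj x y) (hpq : ∀ v ∈ p.support, v ∉ q.support) :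
    (p.append (cons h q)).IsPath := by
  rw [isPath_def, support_append, support_cons, List.tail_cons]
  exact hp.support_nodup.append hq.support_nodup fun v hvp hvq ↦ hpq v hvp hvq

lemma Walk.IsHamiltonian.isHamiltonianCycle_cons [Fintype V] [DecidableEq V] {p : G.Walk b a}
    (hp : p.IsHamiltonian) (h : G.Adj a b) (hV : 3 ≤ Fintype.card V) :
    (cons h p).IsHamiltonianCycle := by
  have hlen := hp.length_eq
  refine ⟨isCycle_iff_isPath_tail_and_le_length.2 ⟨?_, ?_⟩, ?_⟩
  · simpa using hp.isPath
  · simp only [length_cons]; omega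
  · intro v
    simpa using hp v

lemma cube_adj_of_adj_of_eq_or_adj (hab : G.Adj a b) (hx : x = a ∨ G.Adj a x)
    (hy : y = b ∨ G.Adj b y) (hxy : x ≠ y) : G.cube.Adj x y := by
  obtain ⟨p, hp⟩ : ∃ p : G.Walk x a, p.length ≤ 1 := by
    rcases hx with rfl | hx
    · exact ⟨.nil, by simp⟩
    · exact ⟨hx.symm.toWalk, by simp⟩
  obtain ⟨q, hq⟩ : ∃ q : G.Walk b y, q.length ≤ 1 := by
    rcases hy with rfl | hy
    · exact ⟨.nil, by simp⟩
    · exact ⟨hy.toWalk, by simp⟩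
  exact (p.append (.cons hab q)).cube_adj_of_length_le (by simp; omega) hxy

lemma exists_cube_path_to_self_or_adj
    (h : ∀ ⦃x y⦄, G.Adj x y →
      ∃ p : G.cube.Walk x y, p.IsPath ∧ ∀ v, v ∈ p.support ↔ G.Reachable x v) (a : V) :
    ∃ y, (y = a ∨ G.Adj a y) ∧
      ∃ p : G.cube.Walk a y, p.IsPath ∧ ∀ v, v ∈ p.support ↔ G.Reachable a v := by
  by_cases ha : ∃ y, G.Adj a y
  · obtain ⟨y, hay⟩ := ha
    exact ⟨y, .inr hay, h hay⟩
  · push Not at ha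
    refine ⟨a, .inl rfl, .nil, .nil, fun v ↦ ?_⟩
    rw [Walk.support_nil, List.mem_singleton]
    exact ⟨fun hv ↦ hv ▸ .rfl, eq_of_reachable_of_forall_not_adj ha⟩

theorem IsAcyclic.exists_cube_path_covering_component [Finite V] (hG : G.IsAcyclic)
    (hab : G.Adj a b) :
    ∃ p : G.cube.Walk a b, p.IsPath ∧ ∀ v, v ∈ p.support ↔ G.Reachable a v := by
  induction G using WellFoundedLT.induction generalizing a b with
  | ind G ih =>
  set G' := G.deleteEdges {s(a, b)}
  have hG'G : G' ≤ G := deleteEdges_le _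
  have hG'lt : G' < G := hG'G.lt_of_ne fun h ↦ by rw [← h] at hab; simp [G'] at hab
  have hab_split : ¬G'.Reachable a b := isBridge_iff.1 (isAcyclic_iff_forall_adj_isBridge.1 hG hab)
  have hside := exists_cube_path_to_self_or_adj
    (fun x y hxy ↦ ih G' hG'lt (hG.anti hG'G) hxy)
  obtain ⟨x, hx, p, hp, hps⟩ := hside a
  obtain ⟨y, hy, q, hq, hqs⟩ := hside b
  have hpq : ∀ v ∈ p.support, v ∉ q.support := fun v hvp hvq ↦
    hab_split (((hps v).1 hvp).trans ((hqs v).1 hvq).symm)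
  have hxy : x ≠ y := fun h ↦ hpq x p.end_mem_support (h ▸ q.end_mem_support)
  have hcube := cube_mono hG'G
  have hxy_cube : G.cube.Adj x y :=
    cube_adj_of_adj_of_eq_or_adj hab (hx.imp_right (hG'G ·)) (hy.imp_right (hG'G ·)) hxy
  refine ⟨(p.mapLe hcube).append (.cons hxy_cube (q.mapLe hcube).reverse), ?_, fun v ↦ ?_⟩
  · refine ((Walk.isPath_mapLe hcube).2 hp).append_cons
      ((Walk.isPath_mapLe hcube).2 hq).reverse _ ?_
    simpa [Walk.support_mapLe_eq_support] using hpq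
  · simp only [Walk.support_append, Walk.support_cons, Walk.support_reverse,
      Walk.support_mapLe_eq_support, List.tail_cons, List.mem_append, List.mem_reverse, hps, hqs]
    exact ⟨fun h ↦ h.elim (·.mono hG'G) (hab.reachable.trans <| ·.mono hG'G),
      fun ⟨w⟩ ↦ w.reachable_deleteEdges_or (.inl .rfl)⟩

end SimpleGraph

open SimpleGraph in
/-- Every connected finite graph on at least 3 vertices has a Hamiltonian cycle
in its cube. -/
theorem cube_hamiltonian_cycle {V : Type*} [Fintype V] [DecidableEq V]
    (G : SimpleGraph V) (hG : G.Connected) (hV : 3 ≤ Fintype.card V) :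
    ∃ (u : V) (c : G.cube.Walk u u), c.IsHamiltonianCycle := by
  obtain ⟨T, hTG, hT⟩ := hG.exists_isTree_le
  have : Nontrivial V := Fintype.one_lt_card_iff_nontrivial.1 (by omega)
  obtain ⟨a⟩ := hG.nonempty
  obtain ⟨b, hab⟩ := hT.connected.preconnected.exists_adj_of_nontrivial a
  obtain ⟨p, hp, hps⟩ := hT.isAcyclic.exists_cube_path_covering_component hab.symm
  have hham : p.IsHamiltonian := hp.isHamiltonian_of_mem fun v ↦ (hps v).2 (hT.connected b v)
  have hcube : T.cube.Adj a b := hab.toWalk.cube_adj_of_length_le (by simp) hab.ne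
  exact ⟨a, _, (hham.isHamiltonianCycle_cons hcube hV).map (f := Hom.ofLE (cube_mono hTG))
    Function.bijective_id⟩
end

section
/- Let P be a set of k·n points in a metric space partitioned into n tuples A_1,...,A_n of size k, and let λ* be the minimum over all families of k vertex-disjoint trees (each containing exactly one point of every tuple) of the maximum edge length. If T is a minimum spanning tree of P with maximum edge weight λ(T), and some tuple A_i is entirely contained in one component of T minus its heaviest edge, then λ* ≥ λ(T). -/
/-!
Cut property of minimum spanning trees. Removing the heaviest edge `xy` of `T` splits the points
into the side of `x` and the side of `y`. Counting shows that the trees of a feasible solution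
cover all points, so one of them, say on `Q a`, contains `y`; it also contains a point of the
tuple `A i₀`, which lies on the side of `x`. The path between these two points in that tree
crosses the cut along some edge `uv`, and exchanging `xy` for `uv` in `T` gives a spanning tree,
so minimality of `T` forces `dist x y ≤ dist u v`.
-/

open Finset Function

namespace Finset

variable {ι V : Type*} [Fintype ι] [DecidableEq V]

theorem card_le_card_of_forall_card_inter_eq_one {A : ι → Finset V}
    (hA : Pairwise (Disjoint on A)) {s : Finset V} (hs : ∀ i, (s ∩ A i).card = 1) :
    Fintype.card ι ≤ s.card :=
  calc Fintype.card ι = ∑ i, (s ∩ A i).card := by simp [hs]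
    _ = (univ.biUnion fun i => s ∩ A i).card :=
      (card_biUnion fun i _ j _ hij =>
        (hA hij).mono inter_subset_right inter_subset_right).symm
    _ ≤ s.card := card_le_card (biUnion_subset.2 fun _ _ => inter_subset_left)

theorem exists_mem_of_pairwiseDisjoint_of_card_le_sum [Fintype V] {Q : ι → Finset V}
    (hQ : Pairwise (Disjoint on Q)) (hcard : Fintype.card V ≤ ∑ a, (Q a).card) (z : V) :
    ∃ a, z ∈ Q a := by
  have hcover : univ.biUnion Q = univ :=
    eq_univ_of_card _ <| le_antisymm (card_le_univ _)
      (by rwa [card_biUnion fun a _ b _ hab => hQ hab])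
  simpa using (hcover ▸ mem_univ z : z ∈ univ.biUnion Q)

end Finset

namespace SimpleGraph

variable {V : Type*} {G T : SimpleGraph V} {x y u v z : V}

theorem Reachable.deleteEdges_reachable_or (h : G.Reachable x z) :
    (G.deleteEdges {s(x, y)}).Reachable x z ∨ (G.deleteEdges {s(x, y)}).Reachable y z := by
  rw [reachable_iff_reflTransGen] at h
  induction h with
  | refl => exact .inl .rfl
  | @tail b c _ hbc ih =>
    by_cases he : s(b, c) = s(x, y)
    · rcases Sym2.eq_iff.mp he with ⟨-, rfl⟩ | ⟨-, rfl⟩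
      · exact .inr .rfl
      · exact .inl .rfl
    · have hD : (G.deleteEdges {s(x, y)}).Adj b c := by simp [hbc, he]
      exact ih.imp (·.trans hD.reachable) (·.trans hD.reachable)

theorem IsTree.deleteEdges_sup_edge_isTree (hT : T.IsTree)
    (hu : (T.deleteEdges {s(x, y)}).Reachable x u)
    (hv : ¬(T.deleteEdges {s(x, y)}).Reachable x v) :
    (T.deleteEdges {s(x, y)} ⊔ edge u v).IsTree := by
  set D := T.deleteEdges {s(x, y)}
  have hyv : D.Reachable y v :=
    ((hT.connected x v).deleteEdges_reachable_or).resolve_left hv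
  have hD : D ≤ D ⊔ edge u v := le_sup_left
  have huv : (D ⊔ edge u v).Reachable u v := by
    refine Adj.reachable (.inr ?_)
    rw [edge_adj]
    exact ⟨.inl ⟨rfl, rfl⟩, fun h => hv (h ▸ hu)⟩
  refine ⟨(connected_iff_exists_forall_reachable _).2 ⟨x, fun z => ?_⟩, ?_⟩
  · rcases (hT.connected x z).deleteEdges_reachable_or with hxz | hyz
    · exact hxz.mono hD
    · exact (hu.mono hD).trans (huv.trans ((hyv.symm.trans hyz).mono hD))
  · exact (hT.isAcyclic.anti (deleteEdges_le _)).sup_edge_of_not_reachable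
      fun h => hv (hu.trans h)

variable [Finite V]

noncomputable def totalWeight (w : Sym2 V → ℝ) (G : SimpleGraph V) : ℝ :=
  ∑ e ∈ G.edgeSet.toFinite.toFinset, w e

theorem totalWeight_deleteEdges_sup_edge [DecidableEq V] (w : Sym2 V → ℝ) {e : Sym2 V}
    (he : e ∈ G.edgeSet) (huv : ¬G.Adj u v) (hne : u ≠ v) :
    totalWeight w (G.deleteEdges {e} ⊔ edge u v) = totalWeight w G - w e + w s(u, v) := by
  have hedges : (G.deleteEdges {e} ⊔ edge u v).edgeSet.toFinite.toFinset =
      insert s(u, v) (G.edgeSet.toFinite.toFinset.erase e) := by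
    ext f
    simp only [Set.Finite.mem_toFinset, edgeSet_sup, edgeSet_deleteEdges, edgeSet_edge_of_ne hne,
      mem_insert, mem_erase, Set.mem_union, Set.mem_sdiff, Set.mem_singleton_iff]
    tauto
  have hfresh : s(u, v) ∉ G.edgeSet.toFinite.toFinset.erase e := fun h =>
    huv (G.mem_edgeSet.1 ((Set.Finite.mem_toFinset _).1 (Finset.mem_of_mem_erase h)))
  rw [totalWeight, totalWeight, hedges, sum_insert hfresh,
    ← add_sum_erase _ w ((Set.Finite.mem_toFinset _).2 he)]
  ring

theorem IsTree.weight_le_of_reachable_of_not_reachable [DecidableEq V] (w : Sym2 V → ℝ)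
    (hT : T.IsTree) (hmin : ∀ T' : SimpleGraph V, T'.IsTree → totalWeight w T ≤ totalWeight w T')
    (hxy : T.Adj x y) (hu : (T.deleteEdges {s(x, y)}).Reachable x u)
    (hv : ¬(T.deleteEdges {s(x, y)}).Reachable x v) :
    w s(x, y) ≤ w s(u, v) := by
  by_cases he : s(u, v) = s(x, y)
  · rw [he]
  have hne : u ≠ v := fun h => hv (h ▸ hu)
  have hnadj : ¬T.Adj u v := fun h =>
    hv (hu.trans (Adj.reachable (by simp [deleteEdges_adj, h, he])))
  have := hmin _ (hT.deleteEdges_sup_edge_isTree hu hv)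
  rw [totalWeight_deleteEdges_sup_edge w hxy hnadj hne] at this
  linarith

end SimpleGraph

theorem dbst_bottleneck_lower_bound_general {V : Type*} [MetricSpace V] [Fintype V]
    [DecidableEq V] (k n : ℕ)
    (hcardV : Fintype.card V = k * n)
    (A : Fin n → Finset V)
    (hAdisj : ∀ i j, i ≠ j → Disjoint (A i) (A j))
    (T : SimpleGraph V) (hT : T.IsTree)
    (hmin : ∀ T' : SimpleGraph V, T'.IsTree →
      ∑ e ∈ T.edgeSet.toFinite.toFinset,
          Sym2.lift ⟨fun a b => dist a b, fun a b => dist_comm a b⟩ e ≤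
      ∑ e ∈ T'.edgeSet.toFinite.toFinset,
          Sym2.lift ⟨fun a b => dist a b, fun a b => dist_comm a b⟩ e)
    (x y : V) (hxy : T.Adj x y)
    (i₀ : Fin n) (hi₀ : ∀ p ∈ A i₀, (T.deleteEdges {s(x, y)}).Reachable x p) :
    ∀ (Q : Fin k → Finset V),
      (∀ a b, a ≠ b → Disjoint (Q a) (Q b)) →
      (∀ a i, ((Q a) ∩ (A i)).card = 1) →
      ∀ (H : (a : Fin k) → SimpleGraph {z // z ∈ Q a}),
        (∀ a, (H a).IsTree) →
        ∃ (a : Fin k) (u v : {z // z ∈ Q a}),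
          (H a).Adj u v ∧ dist x y ≤ dist u.1 v.1 := by
  intro Q hQdisj hQA H hH
  have hQcard a : n ≤ (Q a).card := by
    simpa using card_le_card_of_forall_card_inter_eq_one (fun i j => hAdisj i j) (hQA a)
  obtain ⟨a, hya⟩ := exists_mem_of_pairwiseDisjoint_of_card_le_sum (fun a b => hQdisj a b)
    (by simpa [hcardV] using sum_le_sum fun a (_ : a ∈ univ) => hQcard a) y
  obtain ⟨p, hp⟩ := card_eq_one.mp (hQA a i₀)
  have hpQA : p ∈ Q a ∩ A i₀ := hp ▸ mem_singleton_self p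
  obtain ⟨path⟩ := (hH a).connected ⟨p, (mem_inter.1 hpQA).1⟩ ⟨y, hya⟩
  have hxy_bridge : ¬(T.deleteEdges {s(x, y)}).Reachable x y :=
    SimpleGraph.isAcyclic_iff_forall_adj_isBridge.mp hT.isAcyclic hxy
  obtain ⟨d, -, hu, hv⟩ := path.exists_boundary_dart
    {z | (T.deleteEdges {s(x, y)}).Reachable x z.1} (hi₀ p (mem_inter.1 hpQA).2) hxy_bridge
  exact ⟨a, d.fst, d.snd, d.adj,
    hT.weight_le_of_reachable_of_not_reachable _ hmin hxy hu hv⟩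

/-- Let `P` be a metric space of `k * n` points partitioned into `n` tuples of
size `k`, let `T` be a minimum spanning tree with heaviest edge `{x, y}`, and
suppose some tuple is entirely contained in the component of `x` in `T` minus
`{x, y}`.  Then every feasible solution of the `k`-DBST problem (a family of
`k` vertex-disjoint trees, each containing exactly one point of every tuple)
has an edge of length at least `dist x y`; that is, `λ* ≥ λ(T)`. -/
theorem dbst_bottleneck_lower_bound {V : Type*} [MetricSpace V] [Fintype V]
    [DecidableEq V] (k n : ℕ) (hk : 0 < k) (hn : 0 < n)
    (hcardV : Fintype.card V = k * n)
    (A : Fin n → Finset V)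
    (hAcard : ∀ i, (A i).card = k)
    (hAdisj : ∀ i j, i ≠ j → Disjoint (A i) (A j))
    (hAcover : Finset.univ.biUnion A = Finset.univ)
    (T : SimpleGraph V) (hT : T.IsTree)
    (hmin : ∀ T' : SimpleGraph V, T'.IsTree →
      ∑ e ∈ T.edgeSet.toFinite.toFinset,
          Sym2.lift ⟨fun a b => dist a b, fun a b => dist_comm a b⟩ e ≤
      ∑ e ∈ T'.edgeSet.toFinite.toFinset,
          Sym2.lift ⟨fun a b => dist a b, fun a b => dist_comm a b⟩ e)
    (x y : V) (hxy : T.Adj x y)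
    (hmax : ∀ a b, T.Adj a b → dist a b ≤ dist x y)
    (i₀ : Fin n) (hi₀ : ∀ p ∈ A i₀, (T.deleteEdges {s(x, y)}).Reachable x p) :
    ∀ (Q : Fin k → Finset V),
      (∀ a b, a ≠ b → Disjoint (Q a) (Q b)) →
      (∀ a i, ((Q a) ∩ (A i)).card = 1) →
      ∀ (H : (a : Fin k) → SimpleGraph {z // z ∈ Q a}),
        (∀ a, (H a).IsTree) →
        ∃ (a : Fin k) (u v : {z // z ∈ Q a}),
          (H a).Adj u v ∧ dist x y ≤ dist u.1 v.1 :=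
  dbst_bottleneck_lower_bound_general k n hcardV A hAdisj T hT hmin x y hxy i₀ hi₀
end
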